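/- arXiv:2003.01055 — 4 statements merged into one kernel-verified Lean document; each statement's English description precedes it below -/
import Mathlib

section
/- Let (𝒳, ≥_*, π) be a market with π ∈ Π₀(𝒳). Then the set M₀(π) of pricing measures is non-empty. -/
open Set Filter

/-- A reflexive and transitive binary relation `≥_*` on real valued functions on `Ω`
satisfying the rationality axioms (i)-(iii) of the paper. -/
structure Rationality (Ω : Type*) where
  ge : (Ω → ℝ) → (Ω → ℝ) → Prop
  refl : ∀ f, ge f f
  trans : ∀ f g h, ge f g → ge g h → ge f h
  /-- axiom (i), first part : `1 >_* 0`. -/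
  one_gt_zero : ge 1 0 ∧ ¬ ge 0 1
  /-- axiom (i), second part : pointwise domination implies `≥_*`. -/
  ge_of_le : ∀ f g : Ω → ℝ, (∀ ω, g ω ≤ f ω) → ge f g
  /-- axiom (ii) : `f ≥_* g` implies `b f + h ≥_* b g + h` for bounded `b ≥ 0`. -/
  affine : ∀ f g b h : Ω → ℝ, ge f g → (∀ ω, 0 ≤ b ω) → (∃ c : ℝ, ∀ ω, b ω ≤ c) →
    ge (fun ω => b ω * f ω + h ω) (fun ω => b ω * g ω + h ω)
  /-- axiom (iii) : `f >_* 0` implies `f ∧ 1 >_* 0`. -/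
  trunc : ∀ f : Ω → ℝ, ge f 0 → ¬ ge 0 f →
    ge (fun ω => min (f ω) 1) 0 ∧ ¬ ge 0 (fun ω => min (f ω) 1)

/-- The asymmetric (strict) part `>_*` of `≥_*`. -/
def Rationality.gt {Ω : Type*} (R : Rationality Ω) (f g : Ω → ℝ) : Prop :=
  R.ge f g ∧ ¬ R.ge g f

/-- A set `A ⊆ Ω` is negligible when `0 ≥_* 1_A`. -/
def Rationality.Negligible {Ω : Type*} (R : Rationality Ω) (A : Set Ω) : Prop :=
  R.ge 0 (A.indicator fun _ => (1 : ℝ))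

/-- `𝒳` is a market : a convex set of functions containing `0` and `1`, whose elements are
`≥_*`-bounded below by constants and which is stable under addition of nonnegative constants. -/
structure IsMarket {Ω : Type*} (R : Rationality Ω) (X : Set (Ω → ℝ)) : Prop where
  convex : ∀ f ∈ X, ∀ g ∈ X, ∀ t : ℝ, 0 ≤ t → t ≤ 1 →
    (fun ω => t * f ω + (1 - t) * g ω) ∈ X
  zero_mem : (0 : Ω → ℝ) ∈ X
  one_mem : (1 : Ω → ℝ) ∈ X
  bddBelow : ∀ f ∈ X, ∃ a : ℝ, R.ge f (fun _ => a)
  add_nonneg_const : ∀ f ∈ X, ∀ lam : ℝ, 0 ≤ lam → (fun ω => f ω + lam) ∈ X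

/-- `π ∈ Π₀(𝒳)` : positively homogeneous, subadditive, normalized and `≥_*`-monotone on `X`. -/
structure IsPriceFun0 {Ω : Type*} (R : Rationality Ω) (X : Set (Ω → ℝ))
    (π : (Ω → ℝ) → ℝ) : Prop where
  posHom : ∀ f ∈ X, ∀ lam : ℝ, 0 < lam → (fun ω => lam * f ω) ∈ X →
    π (fun ω => lam * f ω) = lam * π f
  subadd : ∀ f ∈ X, ∀ g ∈ X, (fun ω => f ω + g ω) ∈ X →
    π (fun ω => f ω + g ω) ≤ π f + π g
  norm_one : π 1 = 1
  mono : ∀ f ∈ X, ∀ g ∈ X, R.ge f g → π g ≤ π f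

/-- `π ∈ Π(𝒳)` : a price function, i.e. an element of `Π₀(𝒳)` free of arbitrage. -/
structure IsPriceFun {Ω : Type*} (R : Rationality Ω) (X : Set (Ω → ℝ))
    (π : (Ω → ℝ) → ℝ) extends IsPriceFun0 R X π : Prop where
  arbFree : ∀ f ∈ X, R.gt f 0 → 0 < π f

/-- Cash additivity of a price `π` on the set `X`. -/
def CashAdditive {Ω : Type*} (X : Set (Ω → ℝ)) (π : (Ω → ℝ) → ℝ) : Prop :=
  ∀ f ∈ X, ∀ a : ℝ, (fun ω => f ω + a) ∈ X → π (fun ω => f ω + a) = π f + a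

/-- The cash additive part `π^a` of `π` : `π^a(f) = inf {π(f + t) - t : t ∈ ℝ, f + t ∈ X}`. -/
noncomputable def cashPart {Ω : Type*} (X : Set (Ω → ℝ)) (π : (Ω → ℝ) → ℝ)
    (f : Ω → ℝ) : ℝ :=
  sInf {y | ∃ t : ℝ, (fun ω => f ω + t) ∈ X ∧ y = π (fun ω => f ω + t) - t}

/-- `L(𝒳)` : the superhedgeable claims `{g : λ X ≥_* |g| for some λ > 0, X ∈ 𝒳}`. -/
def Lspan {Ω : Type*} (R : Rationality Ω) (X : Set (Ω → ℝ)) : Set (Ω → ℝ) :=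
  {g | ∃ lam : ℝ, 0 < lam ∧ ∃ f ∈ X, R.ge (fun ω => lam * f ω) (fun ω => |g ω|)}

/-- `𝒞(π) = {g : λ[X - π(X)] ≥_* g for some λ > 0, X ∈ 𝒳}`. -/
def Cpi {Ω : Type*} (R : Rationality Ω) (X : Set (Ω → ℝ)) (π : (Ω → ℝ) → ℝ) :
    Set (Ω → ℝ) :=
  {g | ∃ lam : ℝ, 0 < lam ∧ ∃ f ∈ X, R.ge (fun ω => lam * (f ω - π f)) g}

/-- Closure in the topology of uniform distance on `𝔉(Ω)`. -/
def uClosure {Ω : Type*} (A : Set (Ω → ℝ)) : Set (Ω → ℝ) :=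
  {g | ∀ ε : ℝ, 0 < ε → ∃ h ∈ A, ∀ ω, |g ω - h ω| ≤ ε}

/-- A finitely additive probability defined on the power set of `Ω`. -/
structure FinAddProb (Ω : Type*) where
  meas : Set Ω → ℝ
  nonneg : ∀ A, 0 ≤ meas A
  total : meas Set.univ = 1
  additive : ∀ A B, Disjoint A B → meas (A ∪ B) = meas A + meas B

/-- Countable additivity of a finitely additive probability. -/
def FinAddProb.CountablyAdditive {Ω : Type*} (m : FinAddProb Ω) : Prop :=
  ∀ A : ℕ → Set Ω, (Pairwise fun i j => Disjoint (A i) (A j)) →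
    HasSum (fun n => m.meas (A n)) (m.meas (⋃ n, A n))

/-- Upper tail `∫_0^∞ m(f > t) dt` (with values in `ℝ≥0∞`), used to define the
finitely additive integral. -/
noncomputable def posTail {Ω : Type*} (m : FinAddProb Ω) (f : Ω → ℝ) : ENNReal :=
  ∫⁻ t in Set.Ioi (0 : ℝ), ENNReal.ofReal (m.meas {ω | t < f ω})

/-- `f ∈ L¹(m)` : both tail integrals are finite. -/
def MemL1 {Ω : Type*} (m : FinAddProb Ω) (f : Ω → ℝ) : Prop :=
  posTail m f ≠ ⊤ ∧ posTail m (fun ω => - f ω) ≠ ⊤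

/-- The integral `∫ f dm` with respect to a finitely additive probability. -/
noncomputable def faIntegral {Ω : Type*} (m : FinAddProb Ω) (f : Ω → ℝ) : ℝ :=
  (posTail m f).toReal - (posTail m (fun ω => - f ω)).toReal

/-- Closure of `A` with respect to the `L¹(m)` distance. -/
def L1Closure {Ω : Type*} (m : FinAddProb Ω) (A : Set (Ω → ℝ)) : Set (Ω → ℝ) :=
  {g | ∀ ε : ℝ, 0 < ε → ∃ h ∈ A, MemL1 m (fun ω => g ω - h ω) ∧
    faIntegral m (fun ω => |g ω - h ω|) ≤ ε}

/-- The set `M₀(π)` of pricing measures. -/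
def M0 {Ω : Type*} (R : Rationality Ω) (X : Set (Ω → ℝ)) (π : (Ω → ℝ) → ℝ) :
    Set (FinAddProb Ω) :=
  {m | (∀ g ∈ Lspan R X, MemL1 m g) ∧ ∀ f ∈ X, faIntegral m f ≤ π f}

/-- The set `M(π)` of strictly positive pricing measures :
those `m ∈ M₀(π)` with `∫ (f ∧ 1) dm > 0` whenever `f >_* 0`. -/
def Mstrict {Ω : Type*} (R : Rationality Ω) (X : Set (Ω → ℝ)) (π : (Ω → ℝ) → ℝ) :
    Set (FinAddProb Ω) :=
  {m | m ∈ M0 R X π ∧ ∀ f : Ω → ℝ, R.gt f 0 → 0 < faIntegral m (fun ω => min (f ω) 1)}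

/-- The set `M(π; Y)` : elements of `M₀(π)` with `∫ (f ∧ 1) dm > 0` for `f ∈ Y`, `f >_* 0`. -/
def MstrictOn {Ω : Type*} (R : Rationality Ω) (X : Set (Ω → ℝ)) (π : (Ω → ℝ) → ℝ)
    (Y : Set (Ω → ℝ)) : Set (FinAddProb Ω) :=
  {m | m ∈ M0 R X π ∧ ∀ f ∈ Y, R.gt f 0 → 0 < faIntegral m (fun ω => min (f ω) 1)}

/-- `𝒳₁ = {X ∧ k : X ∈ 𝒳, k ∈ ℝ₊ ∪ {+∞}}` (`k = +∞` yielding `X` itself). -/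
def X1 {Ω : Type*} (X : Set (Ω → ℝ)) : Set (Ω → ℝ) :=
  {g | ∃ f ∈ X, g = f ∨ ∃ k : ℝ, 0 ≤ k ∧ g = fun ω => min (f ω) k}

/-- The market power `𝓂(ρ)` : the supremum of
`[Σ ρ(fᵢ) - ρ(Σ fᵢ)] / Σ ρ(fᵢ)` over finite families of nonnegative bounded functions
(with the convention `0/0 = 0`, automatic in Lean). -/
noncomputable def marketPower {Ω : Type*} (ρ : (Ω → ℝ) → ℝ) : ℝ :=
  sSup {r | ∃ (N : ℕ) (f : Fin N → Ω → ℝ),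
    (∀ i, ∀ ω, 0 ≤ f i ω) ∧ (∀ i, ∃ c : ℝ, ∀ ω, f i ω ≤ c) ∧
    r = ((∑ i, ρ (f i)) - ρ (fun ω => ∑ i, f i ω)) / (∑ i, ρ (f i))}

/-- The relative market power `𝓂(ρ; Y)`, the supremum being restricted to finite families
of nonnegative bounded functions belonging to `Y`. -/
noncomputable def marketPowerOn {Ω : Type*} (Y : Set (Ω → ℝ)) (ρ : (Ω → ℝ) → ℝ) : ℝ :=
  sSup {r | ∃ (N : ℕ) (f : Fin N → Ω → ℝ), (∀ i, f i ∈ Y) ∧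
    (∀ i, ∀ ω, 0 ≤ f i ω) ∧ (∀ i, ∃ c : ℝ, ∀ ω, f i ω ≤ c) ∧
    r = ((∑ i, ρ (f i)) - ρ (fun ω => ∑ i, f i ω)) / (∑ i, ρ (f i))}

/-- A sequence of nonnegative bounded functions whose sum is bounded. -/
def GoodSeq {Ω : Type*} (f : ℕ → Ω → ℝ) : Prop :=
  (∀ n, ∀ ω, 0 ≤ f n ω) ∧ (∀ n, ∃ c : ℝ, ∀ ω, f n ω ≤ c) ∧
  (∃ c : ℝ, ∀ ω, ∀ k : ℕ, (∑ n ∈ Finset.range k, f n ω) ≤ c)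

/-- The pointwise sum `Σₙ fₙ`. -/
noncomputable def seqSum {Ω : Type*} (f : ℕ → Ω → ℝ) : Ω → ℝ :=
  fun ω => ∑' n, f n ω

/-- The ratio `[Σ_{n ≤ k} ρ(fₙ) - ρ(Σₙ fₙ)] / Σ_{n ≤ k} ρ(fₙ)`. -/
noncomputable def mcRatioSeq {Ω : Type*} (ρ : (Ω → ℝ) → ℝ) (f : ℕ → Ω → ℝ) (k : ℕ) : ℝ :=
  ((∑ n ∈ Finset.range (k + 1), ρ (f n)) - ρ (seqSum f)) /
    (∑ n ∈ Finset.range (k + 1), ρ (f n))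

/-- `𝓂_c(ρ; f₁, f₂, …)` : the limit as `k → ∞` of the above ratios (as an extended real,
computed as a `limsup`, which coincides with the limit whenever the latter exists). -/
noncomputable def mcVal {Ω : Type*} (ρ : (Ω → ℝ) → ℝ) (f : ℕ → Ω → ℝ) : EReal :=
  Filter.limsup (fun k => ((mcRatioSeq ρ f k : ℝ) : EReal)) Filter.atTop

/-- `𝓂_c(ρ)` : the supremum of `𝓂_c(ρ; f₁, f₂, …)` over all admissible sequences. -/
noncomputable def mcSup {Ω : Type*} (ρ : (Ω → ℝ) → ℝ) : EReal :=
  sSup {v | ∃ f : ℕ → Ω → ℝ, GoodSeq f ∧ v = mcVal ρ f}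

/-- `𝓃_c(ρ)` : minus the infimum of `𝓂_c(ρ; f₁, f₂, …)` over all admissible sequences. -/
noncomputable def ncVal {Ω : Type*} (ρ : (Ω → ℝ) → ℝ) : EReal :=
  - sInf {v | ∃ f : ℕ → Ω → ℝ, GoodSeq f ∧ v = mcVal ρ f}

/-- The set `B(Ω)` of bounded functions. -/
def BddFun (Ω : Type*) : Set (Ω → ℝ) :=
  {f | ∃ c : ℝ, ∀ ω, |f ω| ≤ c}

/-- `P` represents `≥_*` : `f ≥_* h` iff `inf_{ε > 0} P(f > h - ε) = 1`. -/
def Represents {Ω : Type*} (P : FinAddProb Ω) (R : Rationality Ω) : Prop :=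
  ∀ f h : Ω → ℝ,
    R.ge f h ↔ sInf {x | ∃ ε : ℝ, 0 < ε ∧ x = P.meas {ω | h ω - ε < f ω}} = 1

/-- The robustness property (4d) : `f + ε >_* 0` for all `ε > 0` implies `f ≥_* 0`. -/
def Robust {Ω : Type*} (R : Rationality Ω) : Prop :=
  ∀ f : Ω → ℝ, (∀ ε : ℝ, 0 < ε → R.gt (fun ω => f ω + ε) 0) → R.ge f 0

/-!
The superhedging price `p(b) = inf {λ π(f) - s : λ > 0, f ∈ 𝒳, λ f ≥_* b + s}` is sublinear on
bounded functions and satisfies `inf b ≤ p(b) ≤ sup b`. By Hahn–Banach some linear `φ ≤ p`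
exists, and `m(A) = φ(1_A)` is a finitely additive probability.

Integrals for `m` are tail integrals `∫₀^∞ m(h > t) dt`, whose lower Riemann sums are values of
`φ` at bounded staircase functions below `h`. If `λ f ≥_* |g|`, every staircase below `|g|` costs
at most `λ π(f)`, so `g ∈ L¹(m)`. If `f ∈ 𝒳` and `f ≥_* a`, then `f ≥_* max f a` and the sets
`{f < b}`, `b < a`, are `m`-null; hence the difference of the staircases of `f` and `-f` is
superhedged by `f + δ`, which gives `∫ f dm ≤ π(f) + 2δ`.
-/
open MeasureTheory
open scoped Pointwise

namespace Rationality

variable {Ω : Type*} (R : Rationality Ω) {f g k : Ω → ℝ}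

theorem add_right (h : R.ge f g) (u : Ω → ℝ) :
    R.ge (fun ω => f ω + u ω) (fun ω => g ω + u ω) := by
  simpa using R.affine f g 1 u h (fun _ => zero_le_one) ⟨1, fun _ => le_rfl⟩

theorem const_mul (h : R.ge f g) {c : ℝ} (hc : 0 ≤ c) :
    R.ge (fun ω => c * f ω) (fun ω => c * g ω) := by
  simpa using R.affine f g (fun _ => c) 0 h (fun _ => hc) ⟨c, fun _ => le_rfl⟩

theorem ge_of_ge_of_le (h : R.ge f g) (hkg : ∀ ω, k ω ≤ g ω) : R.ge f k :=
  R.trans _ _ _ h (R.ge_of_le _ _ hkg)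

/-- Writing `max f a = c * a + (1 - c) * f` with `c` the indicator of `{f < a}`, this is
axiom (ii) applied with the bounded weight `c`. -/
theorem ge_max_const {a : ℝ} (h : R.ge f fun _ => a) : R.ge f fun ω => max (f ω) a := by
  classical
  set c : Ω → ℝ := {ω | f ω < a}.indicator fun _ => 1
  have hc0 : ∀ ω, 0 ≤ c ω := fun ω => indicator_nonneg (fun _ _ => zero_le_one) ω
  have hc1 : ∀ ω, c ω ≤ 1 := fun ω => indicator_le_self' (fun _ _ => zero_le_one) ω
  convert R.affine f (fun _ => a) c (fun ω => (1 - c ω) * f ω) h hc0 ⟨1, hc1⟩ using 1 <;>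
    funext ω <;> by_cases hω : f ω < a <;> simp [c, hω, le_of_lt, not_lt.mp]

theorem negligible_setOf_lt {a b : ℝ} (h : R.ge f fun _ => a) (hba : b < a) :
    R.Negligible {ω | f ω < b} := by
  classical
  have hgap : R.ge 0 fun ω => max (f ω) a - f ω := by
    convert R.add_right (R.ge_max_const h) (fun ω => -f ω) using 1 <;> funext ω <;>
      simp [sub_eq_add_neg]
  have hind : R.ge 0 fun ω => (a - b) * {ω | f ω < b}.indicator (fun _ => 1) ω := by
    refine R.ge_of_ge_of_le hgap fun ω => ?_
    by_cases hω : f ω < b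
    · simp only [hω, indicator_of_mem, mul_one, mem_ofPred_eq]
      linarith [le_max_right (f ω) a]
    · simp only [hω, mem_ofPred_eq, not_false_eq_true, indicator_of_notMem, mul_zero]
      linarith [le_max_left (f ω) a]
  have hab : a - b ≠ 0 := by linarith
  show R.ge 0 _
  convert R.const_mul hind (inv_nonneg.mpr (sub_pos.mpr hba).le) using 1 <;> funext ω
  · simp
  · simp [hab]

end Rationality

namespace IsMarket

variable {Ω : Type*} {R : Rationality Ω} {X : Set (Ω → ℝ)} (hM : IsMarket R X)
include hM

theorem mul_mem {f : Ω → ℝ} (hf : f ∈ X) {t : ℝ} (ht₀ : 0 ≤ t) (ht₁ : t ≤ 1) :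
    (fun ω => t * f ω) ∈ X := by
  simpa using hM.convex f hf 0 hM.zero_mem t ht₀ ht₁

theorem const_mem {c : ℝ} (hc : 0 ≤ c) : (fun _ : Ω => c) ∈ X := by
  simpa using hM.add_nonneg_const 0 hM.zero_mem c hc

end IsMarket

namespace IsPriceFun0

variable {Ω : Type*} {R : Rationality Ω} {X : Set (Ω → ℝ)} {π : (Ω → ℝ) → ℝ}
  (hM : IsMarket R X) (hπ : IsPriceFun0 R X π)
include hM hπ

theorem map_zero : π 0 = 0 := by
  have h := hπ.posHom 0 hM.zero_mem 2 two_pos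
    (by simp only [Pi.zero_apply, mul_zero]; exact hM.zero_mem)
  simp only [Pi.zero_apply, mul_zero] at h
  change π 0 = 2 * π 0 at h
  linarith

theorem map_const {c : ℝ} (hc : 0 ≤ c) : π (fun _ => c) = c := by
  rcases hc.eq_or_lt with rfl | hc
  · exact hπ.map_zero hM
  · simpa [hπ.norm_one] using hπ.posHom 1 hM.one_mem c hc (by simpa using hM.const_mem hc.le)

theorem map_add_const_le {f : Ω → ℝ} (hf : f ∈ X) {c : ℝ} (hc : 0 ≤ c) :
    π (fun ω => f ω + c) ≤ π f + c := by
  simpa [hπ.map_const hM hc] using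
    hπ.subadd f hf _ (hM.const_mem hc) (hM.add_nonneg_const f hf c hc)

theorem le_of_ge_const {f : Ω → ℝ} (hf : f ∈ X) {a : ℝ} (h : R.ge f fun _ => a) : a ≤ π f := by
  set c := max (-a) 0
  have hc : 0 ≤ c := le_max_right _ _
  have hac : 0 ≤ a + c := by simp only [c]; linarith [le_max_left (-a) 0]
  have hmono := hπ.mono _ (hM.add_nonneg_const f hf c hc) _ (hM.const_mem hac)
    (R.add_right h fun _ => c)
  rw [hπ.map_const hM hac] at hmono
  linarith [hπ.map_add_const_le hM hf hc]

theorem exists_mem_mul_add_mul {f₁ f₂ : Ω → ℝ} (hf₁ : f₁ ∈ X) (hf₂ : f₂ ∈ X) {l₁ l₂ : ℝ}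
    (hl₁ : 0 < l₁) (hl₂ : 0 < l₂) :
    ∃ F ∈ X, (∀ ω, (l₁ + l₂) * F ω = l₁ * f₁ ω + l₂ * f₂ ω) ∧
      (l₁ + l₂) * π F ≤ l₁ * π f₁ + l₂ * π f₂ := by
  have hl : 0 < l₁ + l₂ := add_pos hl₁ hl₂
  set t := l₁ / (l₁ + l₂)
  have ht₀ : 0 < t := div_pos hl₁ hl
  have ht₁ : 0 < 1 - t := by
    rw [sub_pos, div_lt_one hl]; linarith
  have h₁ := hM.mul_mem hf₁ ht₀.le (by linarith)
  have h₂ := hM.mul_mem hf₂ ht₁.le (by linarith)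
  have hF := hM.convex f₁ hf₁ f₂ hf₂ t ht₀.le (by linarith)
  have hlt : (l₁ + l₂) * t = l₁ := by simp only [t]; field_simp
  have hlt' : (l₁ + l₂) * (1 - t) = l₂ := by rw [mul_sub, hlt]; ring
  refine ⟨_, hF, fun ω => ?_, ?_⟩
  · rw [mul_add, ← mul_assoc, ← mul_assoc, hlt, hlt']
  · have hsub := hπ.subadd _ h₁ _ h₂ hF
    rw [hπ.posHom f₁ hf₁ t ht₀ h₁, hπ.posHom f₂ hf₂ (1 - t) ht₁ h₂] at hsub
    calc (l₁ + l₂) * π _ ≤ (l₁ + l₂) * (t * π f₁ + (1 - t) * π f₂) :=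
          mul_le_mul_of_nonneg_left hsub hl.le
      _ = l₁ * π f₁ + l₂ * π f₂ := by rw [mul_add, ← mul_assoc, ← mul_assoc, hlt, hlt']

end IsPriceFun0

section Superhedging

variable {Ω : Type*} (R : Rationality Ω) (X : Set (Ω → ℝ)) (π : (Ω → ℝ) → ℝ)

def superhedgingPrices (b : Ω → ℝ) : Set ℝ :=
  {y | ∃ lam : ℝ, 0 < lam ∧ ∃ f ∈ X, ∃ s : ℝ,
    R.ge (fun ω => lam * f ω) (fun ω => b ω + s) ∧ y = lam * π f - s}

noncomputable def superhedgingPrice (b : Ω → ℝ) : ℝ :=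
  sInf (superhedgingPrices R X π b)

variable {R X π}

theorem smul_superhedgingPrices_subset {c : ℝ} (hc : 0 < c) (b : Ω → ℝ) :
    c • superhedgingPrices R X π b ⊆ superhedgingPrices R X π (c • b) := by
  rintro _ ⟨_, ⟨lam, hlam, f, hf, s, hge, rfl⟩, rfl⟩
  refine ⟨c * lam, mul_pos hc hlam, f, hf, c * s, ?_, by simp only [smul_eq_mul]; ring⟩
  convert R.const_mul hge hc.le using 1 <;> funext ω
  · ring
  · simp only [Pi.smul_apply, smul_eq_mul]; ring

theorem superhedgingPrices_smul {c : ℝ} (hc : 0 < c) (b : Ω → ℝ) :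
    superhedgingPrices R X π (c • b) = c • superhedgingPrices R X π b := by
  refine (Set.Subset.antisymm ?_ (smul_superhedgingPrices_subset hc b))
  have h := smul_superhedgingPrices_subset (R := R) (X := X) (π := π) (inv_pos.mpr hc) (c • b)
  rw [inv_smul_smul₀ hc.ne'] at h
  exact (Set.subset_smul_set_iff₀ hc.ne').2 h

theorem superhedgingPrice_smul {c : ℝ} (hc : 0 < c) (b : Ω → ℝ) :
    superhedgingPrice R X π (c • b) = c * superhedgingPrice R X π b := by
  rw [superhedgingPrice, superhedgingPrices_smul hc, Real.sInf_smul_of_nonneg hc.le]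
  rfl

theorem superhedgingPrice_zero : superhedgingPrice R X π 0 = 0 := by
  have h := superhedgingPrice_smul (R := R) (X := X) (π := π) two_pos 0
  rw [smul_zero] at h
  linarith

variable (hM : IsMarket R X) (hπ : IsPriceFun0 R X π)
include hM hπ

theorem superhedgingPrices_add_subset (b₁ b₂ : Ω → ℝ) :
    superhedgingPrices R X π b₁ + superhedgingPrices R X π b₂ ⊆
      superhedgingPrices R X π (b₁ + b₂) := by
  rintro _ ⟨_, ⟨l₁, hl₁, f₁, hf₁, s₁, hge₁, rfl⟩, _, ⟨l₂, hl₂, f₂, hf₂, s₂, hge₂, rfl⟩, rfl⟩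
  obtain ⟨F, hF, hFω, hπF⟩ := hπ.exists_mem_mul_add_mul hM hf₁ hf₂ hl₁ hl₂
  -- the cash part absorbs the saving `l₁ π f₁ + l₂ π f₂ - (l₁ + l₂) π F ≥ 0`
  set s := (l₁ + l₂) * π F - (l₁ * π f₁ - s₁ + (l₂ * π f₂ - s₂))
  refine ⟨l₁ + l₂, add_pos hl₁ hl₂, F, hF, s, ?_, by simp only [s]; ring⟩
  have h := R.trans _ _ _ (R.add_right hge₁ fun ω => l₂ * f₂ ω)
    (by convert R.add_right hge₂ (fun ω => b₁ ω + s₁) using 1; funext ω; ring)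
  refine R.ge_of_ge_of_le (by convert h using 1; funext ω; exact hFω ω) fun ω => ?_
  simp only [Pi.add_apply, s]
  linarith

theorem const_mem_superhedgingPrices {b : Ω → ℝ} {c : ℝ} (hbc : ∀ ω, b ω ≤ c) :
    c ∈ superhedgingPrices R X π b := by
  refine ⟨1, one_pos, _, hM.const_mem (le_max_right c 0), max c 0 - c,
    R.ge_of_le _ _ fun ω => ?_, by rw [hπ.map_const hM (le_max_right c 0)]; ring⟩
  linarith [hbc ω]

theorem le_of_mem_superhedgingPrices {b : Ω → ℝ} {d : ℝ} (hdb : ∀ ω, d ≤ b ω) {y : ℝ}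
    (hy : y ∈ superhedgingPrices R X π b) : d ≤ y := by
  obtain ⟨lam, hlam, f, hf, s, hge, rfl⟩ := hy
  have hf_ge : R.ge f fun _ => lam⁻¹ * (d + s) := by
    convert R.const_mul (R.ge_of_ge_of_le hge (k := fun _ => d + s) fun ω => by linarith [hdb ω])
      (inv_nonneg.mpr hlam.le) using 1
    funext ω; field_simp
  have := mul_le_mul_of_nonneg_left (hπ.le_of_ge_const hM hf hf_ge) hlam.le
  rw [mul_inv_cancel_left₀ hlam.ne'] at this
  linarith

theorem superhedgingPrice_le {b : Ω → ℝ} (hb : b ∈ BddFun Ω) {y : ℝ}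
    (hy : y ∈ superhedgingPrices R X π b) : superhedgingPrice R X π b ≤ y := by
  obtain ⟨c, hc⟩ := hb
  exact csInf_le ⟨-c, fun _ => le_of_mem_superhedgingPrices hM hπ fun ω => (abs_le.mp (hc ω)).1⟩ hy

theorem superhedgingPrice_le_of_ge {b : Ω → ℝ} (hb : b ∈ BddFun Ω) {lam : ℝ}
    (hlam : 0 < lam) {f : Ω → ℝ} (hf : f ∈ X) (h : R.ge (fun ω => lam * f ω) b) :
    superhedgingPrice R X π b ≤ lam * π f := by
  simpa using superhedgingPrice_le hM hπ hb ⟨lam, hlam, f, hf, 0, by simpa using h, by simp⟩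

theorem superhedgingPrice_le_const {b : Ω → ℝ} (hb : b ∈ BddFun Ω) {c : ℝ}
    (hbc : ∀ ω, b ω ≤ c) : superhedgingPrice R X π b ≤ c :=
  superhedgingPrice_le hM hπ hb (const_mem_superhedgingPrices hM hπ hbc)

theorem superhedgingPrice_add_le {b₁ b₂ : Ω → ℝ} (hb₁ : b₁ ∈ BddFun Ω) (hb₂ : b₂ ∈ BddFun Ω) :
    superhedgingPrice R X π (b₁ + b₂) ≤
      superhedgingPrice R X π b₁ + superhedgingPrice R X π b₂ := by
  obtain ⟨c₁, hc₁⟩ := hb₁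
  obtain ⟨c₂, hc₂⟩ := hb₂
  have hne : ∀ {b : Ω → ℝ} {c : ℝ}, (∀ ω, |b ω| ≤ c) → (superhedgingPrices R X π b).Nonempty :=
    fun hc => ⟨_, const_mem_superhedgingPrices hM hπ fun ω => (abs_le.mp (hc ω)).2⟩
  have hbdd : ∀ {b : Ω → ℝ} {c : ℝ}, (∀ ω, |b ω| ≤ c) → BddBelow (superhedgingPrices R X π b) :=
    fun hc => ⟨_, fun _ => le_of_mem_superhedgingPrices hM hπ fun ω => (abs_le.mp (hc ω)).1⟩
  rw [superhedgingPrice, superhedgingPrice, superhedgingPrice,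
    ← csInf_add (hne hc₁) (hbdd hc₁) (hne hc₂) (hbdd hc₂)]
  refine csInf_le_csInf (hbdd (c := c₁ + c₂) fun ω => ?_) ((hne hc₁).add (hne hc₂))
    (superhedgingPrices_add_subset hM hπ b₁ b₂)
  exact (abs_add_le _ _).trans (add_le_add (hc₁ ω) (hc₂ ω))

end Superhedging

section Bounded

variable (Ω : Type*)

def bddSubmodule : Submodule ℝ (Ω → ℝ) where
  carrier := BddFun Ω
  add_mem' := by
    rintro f g ⟨c, hc⟩ ⟨d, hd⟩
    exact ⟨c + d, fun ω => (abs_add_le _ _).trans (add_le_add (hc ω) (hd ω))⟩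
  zero_mem' := ⟨0, by simp⟩
  smul_mem' := by
    rintro a f ⟨c, hc⟩
    exact ⟨|a| * c, fun ω => by
      simpa [abs_mul] using mul_le_mul_of_nonneg_left (hc ω) (abs_nonneg a)⟩

variable {Ω}

noncomputable def bddIndicator (A : Set Ω) : bddSubmodule Ω :=
  ⟨A.indicator fun _ => 1, 1, fun ω => by
    by_cases hω : ω ∈ A <;> simp [hω]⟩

theorem bddIndicator_union {A B : Set Ω} (h : Disjoint A B) :
    bddIndicator (A ∪ B) = bddIndicator A + bddIndicator B :=
  Subtype.ext (indicator_union_of_disjoint h _)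

theorem exists_linear_le_superhedgingPrice {R : Rationality Ω} {X : Set (Ω → ℝ)}
    {π : (Ω → ℝ) → ℝ} (hM : IsMarket R X) (hπ : IsPriceFun0 R X π) :
    ∃ φ : bddSubmodule Ω →ₗ[ℝ] ℝ, ∀ b, φ b ≤ superhedgingPrice R X π b := by
  obtain ⟨φ, -, hφ⟩ := exists_extension_of_le_sublinear (LinearMap.toPMap 0 ⊥)
    (fun b : bddSubmodule Ω => superhedgingPrice R X π b)
    (fun c hc b => by rw [Submodule.coe_smul]; exact superhedgingPrice_smul hc _)
    (fun b₁ b₂ => by rw [Submodule.coe_add]; exact superhedgingPrice_add_le hM hπ b₁.2 b₂.2)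
    (fun b => by
      rw [(Submodule.mem_bot ℝ).mp b.2]
      exact superhedgingPrice_zero.ge)
  exact ⟨φ, hφ⟩

theorem exists_finAddProb_meas_eq (φ : bddSubmodule Ω →ₗ[ℝ] ℝ)
    (hφ : ∀ (b : bddSubmodule Ω) (c : ℝ), (∀ ω, b.1 ω ≤ c) → φ b ≤ c) :
    ∃ m : FinAddProb Ω, ∀ A, m.meas A = φ (bddIndicator A) := by
  have hneg : ∀ (b : bddSubmodule Ω) (d : ℝ), (∀ ω, d ≤ b.1 ω) → d ≤ φ b := fun b d hdb => by
    have := hφ (-b) (-d) fun ω => neg_le_neg (hdb ω)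
    rw [map_neg] at this
    linarith
  refine ⟨⟨fun A => φ (bddIndicator A), fun A => hneg _ 0 fun ω => ?_, ?_,
    fun A B h => by simp only [bddIndicator_union h, map_add]⟩, fun _ => rfl⟩
  · exact indicator_nonneg (fun _ _ => zero_le_one) ω
  · exact le_antisymm (hφ _ 1 fun ω => by simp [bddIndicator])
      (hneg _ 1 fun ω => by simp [bddIndicator])

end Bounded

section Antitone

open scoped ENNReal

variable {F : ℝ → ℝ≥0∞} {δ : ℝ}

theorem lintegral_Ioi_zero_eq_tsum_Ioc (F : ℝ → ℝ≥0∞) (hδ : 0 < δ) :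
    ∫⁻ t in Ioi 0, F t = ∑' k : ℕ, ∫⁻ t in Ioc (k * δ) ((k + 1) * δ), F t := by
  have hmono : Monotone fun k : ℕ => (k : ℝ) * δ := fun _ _ hij =>
    mul_le_mul_of_nonneg_right (Nat.cast_le.mpr hij) hδ.le
  have hunbdd : ¬BddAbove (range fun k : ℕ => (k : ℝ) * δ) := by
    rintro ⟨x, hx⟩
    obtain ⟨k, hk⟩ := exists_nat_gt (x / δ)
    have := hx ⟨k, rfl⟩
    rw [div_lt_iff₀ hδ] at hk
    linarith
  have hunion := iUnion_Ioc_map_succ_eq_Ioi (fun _ => hmono bot_le) hunbdd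
  have hdisj := Monotone.pairwise_disjoint_on_Ioc_succ hmono
  simp only [Nat.succ_eq_succ, Nat.succ_eq_add_one, Nat.cast_add, Nat.cast_one, bot_eq_zero,
    Nat.cast_zero, zero_mul] at hunion hdisj
  rw [← hunion, lintegral_iUnion (fun _ => measurableSet_Ioc) hdisj]

theorem Antitone.mul_le_setLIntegral_Ioc (hF : Antitone F) {a b : ℝ} :
    ENNReal.ofReal (b - a) * F b ≤ ∫⁻ t in Ioc a b, F t := by
  calc ENNReal.ofReal (b - a) * F b = ∫⁻ _ in Ioc a b, F b := by
        rw [setLIntegral_const, Real.volume_Ioc, mul_comm]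
    _ ≤ ∫⁻ t in Ioc a b, F t := setLIntegral_mono' measurableSet_Ioc fun t ht => hF ht.2

theorem Antitone.setLIntegral_Ioc_le (hF : Antitone F) {a b : ℝ} :
    ∫⁻ t in Ioc a b, F t ≤ ENNReal.ofReal (b - a) * F a := by
  calc ∫⁻ t in Ioc a b, F t ≤ ∫⁻ _ in Ioc a b, F a :=
        setLIntegral_mono' measurableSet_Ioc fun t ht => hF ht.1.le
    _ = ENNReal.ofReal (b - a) * F a := by rw [setLIntegral_const, Real.volume_Ioc, mul_comm]

theorem Antitone.sum_mul_le_lintegral_Ioi (hF : Antitone F) (hδ : 0 < δ) (n : ℕ) :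
    ∑ k ∈ Finset.range n, ENNReal.ofReal δ * F ((k + 1) * δ) ≤ ∫⁻ t in Ioi 0, F t := by
  rw [lintegral_Ioi_zero_eq_tsum_Ioc F hδ]
  refine le_trans (Finset.sum_le_sum fun k _ => ?_) (ENNReal.sum_le_tsum _)
  simpa [add_mul] using hF.mul_le_setLIntegral_Ioc (a := k * δ) (b := (k + 1) * δ)

theorem Antitone.lintegral_Ioi_le_tsum (hF : Antitone F) (hδ : 0 < δ) :
    ∫⁻ t in Ioi 0, F t ≤ ∑' k : ℕ, ENNReal.ofReal δ * F (k * δ) := by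
  rw [lintegral_Ioi_zero_eq_tsum_Ioc F hδ]
  refine ENNReal.tsum_le_tsum fun k => ?_
  simpa [add_mul] using hF.setLIntegral_Ioc_le (a := k * δ) (b := (k + 1) * δ)

end Antitone

namespace FinAddProb

open scoped ENNReal

variable {Ω : Type*} (m : FinAddProb Ω)

theorem meas_mono {A B : Set Ω} (h : A ⊆ B) : m.meas A ≤ m.meas B := by
  have hadd := m.additive A (B \ A) disjoint_sdiff_right
  rw [union_sdiff_cancel h] at hadd
  linarith [m.nonneg (B \ A)]

theorem meas_le_one (A : Set Ω) : m.meas A ≤ 1 :=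
  m.total ▸ m.meas_mono (subset_univ A)

theorem antitone_meas_setOf_lt (h : Ω → ℝ) :
    Antitone fun t => ENNReal.ofReal (m.meas {ω | t < h ω}) :=
  fun _ _ hst => ENNReal.ofReal_le_ofReal (m.meas_mono fun _ hω => lt_of_le_of_lt hst hω)

/-- Lower Riemann sum, with mesh `δ` and `n` steps, of the tail integral `posTail m h`. -/
def lowerSum (h : Ω → ℝ) (δ : ℝ) (n : ℕ) : ℝ :=
  ∑ k ∈ Finset.range n, δ * m.meas {ω | ((k : ℝ) + 1) * δ < h ω}

theorem lowerSum_nonneg (h : Ω → ℝ) {δ : ℝ} (hδ : 0 ≤ δ) (n : ℕ) : 0 ≤ m.lowerSum h δ n :=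
  Finset.sum_nonneg fun _ _ => mul_nonneg hδ (m.nonneg _)

theorem posTail_mono {f g : Ω → ℝ} (hfg : ∀ ω, f ω ≤ g ω) : posTail m f ≤ posTail m g :=
  setLIntegral_mono' measurableSet_Ioi fun _ _ =>
    ENNReal.ofReal_le_ofReal (m.meas_mono fun _ hω => lt_of_lt_of_le hω (hfg _))

theorem ofReal_lowerSum_le_posTail (h : Ω → ℝ) {δ : ℝ} (hδ : 0 < δ) (n : ℕ) :
    ENNReal.ofReal (m.lowerSum h δ n) ≤ posTail m h := by
  rw [lowerSum, ENNReal.ofReal_sum_of_nonneg fun _ _ => mul_nonneg hδ.le (m.nonneg _)]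
  simpa only [posTail, ENNReal.ofReal_mul hδ.le] using
    (m.antitone_meas_setOf_lt h).sum_mul_le_lintegral_Ioi hδ n

theorem posTail_le_of_lowerSum_le (h : Ω → ℝ) {δ C : ℝ} (hδ : 0 < δ)
    (hC : ∀ᶠ n in atTop, m.lowerSum h δ n ≤ C) :
    posTail m h ≤ ENNReal.ofReal (δ + C) := by
  obtain ⟨n₀, hn₀⟩ := hC.exists
  have hC₀ : 0 ≤ C := (m.lowerSum_nonneg h hδ.le n₀).trans hn₀
  set G : ℕ → ℝ≥0∞ := fun k => ENNReal.ofReal δ * ENNReal.ofReal (m.meas {ω | k * δ < h ω})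
  have hsum : ∀ n, ∑ k ∈ Finset.range (n + 1), G k =
      ENNReal.ofReal δ * ENNReal.ofReal (m.meas {ω | 0 < h ω}) +
        ENNReal.ofReal (m.lowerSum h δ n) := by
    intro n
    rw [Finset.sum_range_succ', add_comm, lowerSum,
      ENNReal.ofReal_sum_of_nonneg fun _ _ => mul_nonneg hδ.le (m.nonneg _)]
    simp [G, ENNReal.ofReal_mul hδ.le]
  refine ((m.antitone_meas_setOf_lt h).lintegral_Ioi_le_tsum hδ).trans
    (le_of_tendsto ((ENNReal.tendsto_nat_tsum G).comp (tendsto_add_atTop_nat 1)) ?_)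
  filter_upwards [hC] with n hn
  rw [Function.comp_apply, hsum, ENNReal.ofReal_add hδ.le hC₀]
  gcongr
  exact mul_le_of_le_one_right' (ENNReal.ofReal_le_one.mpr (m.meas_le_one _))

theorem posTail_le_of_meas_eq_zero (h : Ω → ℝ) {c : ℝ}
    (hnull : ∀ t, c < t → m.meas {ω | t < h ω} = 0) :
    posTail m h ≤ ENNReal.ofReal c := by
  calc posTail m h ≤ ∫⁻ t in Ioi 0, (Iic c).indicator 1 t := by
        refine setLIntegral_mono' measurableSet_Ioi fun t _ => ?_
        by_cases htc : t ≤ c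
        · simpa [htc] using m.meas_le_one _
        · simp [htc, hnull t (not_le.mp htc)]
    _ = ENNReal.ofReal c := by
        rw [lintegral_indicator_one measurableSet_Iic, Measure.restrict_apply measurableSet_Iic,
          Iic_inter_Ioi, Real.volume_Ioc, sub_zero]

end FinAddProb

section Staircase

variable {Ω : Type*}

theorem mul_ite_le_min_sub_min {x b δ : ℝ} (hδ : 0 ≤ δ) :
    δ * (if b < x then 1 else 0) ≤ min x b - min x (b - δ) := by
  split_ifs with hbx
  · rw [min_eq_right hbx.le, min_eq_right (by linarith)]; linarith
  · simp only [mul_zero, sub_nonneg]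
    exact min_le_min_left x (by linarith)

theorem min_sub_min_le_mul_ite {x b δ : ℝ} (hδ : 0 ≤ δ) :
    min x (b + δ) - min x b ≤ δ * (if b < x then 1 else 0) := by
  split_ifs with hbx
  · rw [min_eq_right hbx.le]; linarith [min_le_right x (b + δ)]
  · rw [min_eq_left (not_lt.mp hbx), min_eq_left (by linarith [not_lt.mp hbx])]; simp

/-- A bounded minorant of `max h 0` whose `m`-integral is `m.lowerSum h δ n`. -/
noncomputable def lowerStair (h : Ω → ℝ) (δ : ℝ) (n : ℕ) : bddSubmodule Ω :=
  ∑ k ∈ Finset.range n, δ • bddIndicator {ω | ((k : ℝ) + 1) * δ < h ω}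

theorem lowerStair_apply (h : Ω → ℝ) (δ : ℝ) (n : ℕ) (ω : Ω) :
    (lowerStair h δ n).1 ω =
      ∑ k ∈ Finset.range n, δ * (if ((k : ℝ) + 1) * δ < h ω then 1 else 0) := by
  simp [lowerStair, bddIndicator, Finset.sum_apply, indicator_apply]

theorem lowerStair_apply_le (h : Ω → ℝ) {δ : ℝ} (hδ : 0 ≤ δ) (n : ℕ) (ω : Ω) :
    (lowerStair h δ n).1 ω ≤ min (h ω) (n * δ) - min (h ω) 0 := by
  rw [lowerStair_apply]
  calc _ ≤ ∑ k ∈ Finset.range n, (min (h ω) (((k + 1 : ℕ) : ℝ) * δ) - min (h ω) (k * δ)) :=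
        Finset.sum_le_sum fun k _ => by
          refine (mul_ite_le_min_sub_min hδ).trans_eq ?_
          push_cast; ring_nf
    _ = _ := by rw [Finset.sum_range_sub (fun k : ℕ => min (h ω) (k * δ))]; simp

theorem le_lowerStair_apply (h : Ω → ℝ) {δ : ℝ} (hδ : 0 ≤ δ) (n : ℕ) (ω : Ω) :
    min (h ω) ((n + 1) * δ) - min (h ω) δ ≤ (lowerStair h δ n).1 ω := by
  rw [lowerStair_apply]
  calc _ = ∑ k ∈ Finset.range n,
        (min (h ω) ((((k + 1 : ℕ) : ℝ) + 1) * δ) - min (h ω) (((k : ℝ) + 1) * δ)) := by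
        rw [Finset.sum_range_sub (fun k : ℕ => min (h ω) (((k : ℝ) + 1) * δ))]; simp
    _ ≤ _ := Finset.sum_le_sum fun k _ => by
          refine le_of_eq_of_le ?_ (min_sub_min_le_mul_ite hδ)
          push_cast; ring_nf

theorem lowerStair_apply_le_max (h : Ω → ℝ) {δ : ℝ} (hδ : 0 ≤ δ) (n : ℕ) (ω : Ω) :
    (lowerStair h δ n).1 ω ≤ max (h ω) 0 := by
  have := lowerStair_apply_le h hδ n ω
  have := min_le_left (h ω) (n * δ)
  rcases le_total (h ω) 0 with h0 | h0
  · rw [min_eq_left h0] at *; rw [max_eq_right h0]; linarith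
  · rw [min_eq_right h0] at *; rw [max_eq_left h0]; linarith

theorem lowerStair_sub_apply_le (h : Ω → ℝ) {δ : ℝ} (hδ : 0 ≤ δ) (n : ℕ) (ω : Ω) :
    (lowerStair h δ n - lowerStair (fun ω => -h ω) δ n).1 ω ≤ max (h ω) (-(n * δ)) + δ := by
  have hup := lowerStair_apply_le h hδ n ω
  have hlow := le_lowerStair_apply (fun ω => -h ω) hδ n ω
  have hnδ : 0 ≤ n * δ := mul_nonneg n.cast_nonneg hδ
  simp only [Submodule.coe_sub, Pi.sub_apply, add_mul, one_mul] at *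
  simp only [min_def, max_def] at *
  split_ifs at * <;> linarith

end Staircase

section PricingMeasure

variable {Ω : Type*} {R : Rationality Ω} {X : Set (Ω → ℝ)} {π : (Ω → ℝ) → ℝ}
  {φ : bddSubmodule Ω →ₗ[ℝ] ℝ} {m : FinAddProb Ω} (hm : ∀ A, m.meas A = φ (bddIndicator A))
include hm

theorem lowerSum_eq_map_lowerStair (h : Ω → ℝ) (δ : ℝ) (n : ℕ) :
    m.lowerSum h δ n = φ (lowerStair h δ n) := by
  simp [FinAddProb.lowerSum, lowerStair, hm]

variable (hM : IsMarket R X) (hπ : IsPriceFun0 R X π)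
  (hφ : ∀ b, φ b ≤ superhedgingPrice R X π b)
include hM hπ hφ

theorem meas_eq_zero_of_negligible {A : Set Ω} (hA : R.Negligible A) : m.meas A = 0 := by
  refine le_antisymm ?_ (m.nonneg A)
  have h := superhedgingPrice_le_of_ge hM hπ (bddIndicator A).2 one_pos hM.zero_mem
    (by simp only [one_mul]; exact hA)
  rw [hm]
  linarith [hφ (bddIndicator A), hπ.map_zero hM]

theorem memL1_of_mem_Lspan {g : Ω → ℝ} (hg : g ∈ Lspan R X) : MemL1 m g := by
  obtain ⟨lam, hlam, f, hf, hge⟩ := hg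
  have hsum : ∀ n, m.lowerSum (fun ω => |g ω|) 1 n ≤ lam * π f := fun n => by
    rw [lowerSum_eq_map_lowerStair hm]
    refine (hφ _).trans (superhedgingPrice_le_of_ge hM hπ (lowerStair _ 1 n).2 hlam hf
      (R.ge_of_ge_of_le hge fun ω => ?_))
    simpa using lowerStair_apply_le_max (fun ω => |g ω|) zero_le_one n ω
  have habs : posTail m (fun ω => |g ω|) ≠ ⊤ := ne_top_of_le_ne_top ENNReal.ofReal_ne_top
    (m.posTail_le_of_lowerSum_le _ one_pos (Eventually.of_forall hsum))
  exact ⟨ne_top_of_le_ne_top habs (m.posTail_mono fun ω => le_abs_self (g ω)),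
    ne_top_of_le_ne_top habs (m.posTail_mono fun ω => neg_le_abs (g ω))⟩

/-- The signed staircase lies below `max f (-n δ) + δ`, and `f ≥_* max f (-n δ)` because
`-n δ ≤ a`. -/
theorem lowerSum_sub_lowerSum_le {f : Ω → ℝ} (hf : f ∈ X) {a : ℝ} (ha : R.ge f fun _ => a)
    {δ : ℝ} (hδ : 0 < δ) {n : ℕ} (hn : -a ≤ n * δ) :
    m.lowerSum f δ n - m.lowerSum (fun ω => -f ω) δ n ≤ π f + δ := by
  rw [lowerSum_eq_map_lowerStair hm, lowerSum_eq_map_lowerStair hm, ← map_sub]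
  have hmax := R.ge_max_const (R.ge_of_ge_of_le ha (k := fun _ => -(n * δ)) fun _ => by linarith)
  have hge : R.ge (fun ω => 1 * (f ω + δ))
      (lowerStair f δ n - lowerStair (fun ω => -f ω) δ n).1 := by
    refine R.ge_of_ge_of_le ?_ (lowerStair_sub_apply_le f hδ.le n)
    simpa using R.add_right hmax fun _ => δ
  calc φ _ ≤ 1 * π (fun ω => f ω + δ) := (hφ _).trans
        (superhedgingPrice_le_of_ge hM hπ (Subtype.prop _) one_pos
          (hM.add_nonneg_const f hf δ hδ.le) hge)
    _ ≤ π f + δ := by rw [one_mul]; exact hπ.map_add_const_le hM hf hδ.le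

theorem faIntegral_le {f : Ω → ℝ} (hf : f ∈ X) : faIntegral m f ≤ π f := by
  obtain ⟨a, ha⟩ := hM.bddBelow f hf
  have hneg : posTail m (fun ω => -f ω) ≠ ⊤ := by
    refine ne_top_of_le_ne_top ENNReal.ofReal_ne_top
      (m.posTail_le_of_meas_eq_zero _ (c := -a) fun t ht => ?_)
    have := meas_eq_zero_of_negligible hm hM hπ hφ
      (R.negligible_setOf_lt ha (b := -t) (by linarith))
    simpa [lt_neg] using this
  refine le_of_forall_pos_le_add fun ε hε => ?_
  set δ := ε / 2 with hδε
  have hδ : 0 < δ := half_pos hε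
  have hev : ∀ᶠ n in atTop,
      m.lowerSum f δ n ≤ π f + δ + (posTail m fun ω => -f ω).toReal := by
    filter_upwards [eventually_ge_atTop ⌈-a / δ⌉₊] with n hn
    have hn' : -a ≤ n * δ := (div_le_iff₀ hδ).mp (Nat.ceil_le.mp hn)
    have := lowerSum_sub_lowerSum_le hm hM hπ hφ hf ha hδ hn'
    have := (ENNReal.ofReal_le_iff_le_toReal hneg).mp (m.ofReal_lowerSum_le_posTail _ hδ n)
    linarith
  obtain ⟨n, hn⟩ := hev.exists
  have hpos := ENNReal.toReal_le_of_le_ofReal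
    (by linarith [m.lowerSum_nonneg f hδ.le n]) (m.posTail_le_of_lowerSum_le f hδ hev)
  rw [faIntegral]
  linarith

end PricingMeasure

/-- for a market `(𝒳, ≥_*, π)` with `π ∈ Π₀(𝒳)`, the set `M₀(π)` of
pricing measures is non-empty. -/
theorem M0_nonempty {Ω : Type*} (R : Rationality Ω) (X : Set (Ω → ℝ)) (π : (Ω → ℝ) → ℝ)
    (hM : IsMarket R X) (hπ : IsPriceFun0 R X π) :
    (M0 R X π).Nonempty := by
  obtain ⟨φ, hφ⟩ := exists_linear_le_superhedgingPrice hM hπ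
  obtain ⟨m, hm⟩ := exists_finAddProb_meas_eq φ fun b c hbc =>
    (hφ b).trans (superhedgingPrice_le_const hM hπ b.2 hbc)
  exact ⟨m, fun g hg => memL1_of_mem_Lspan hm hM hπ hφ hg,
    fun f hf => faIntegral_le hm hM hπ hφ hf⟩
end

section
/- Let (𝒳, ≥_*, π) be a market with π ∈ Π₀(𝒳) and π^a its cash additive part. Then 𝒞(π) ⊆ 𝒞(π^a) ⊆ cl_u 𝒞(π), where cl_u denotes closure in the uniform distance. -/
open Set Filter

section Aux

variable {Ω : Type*}

private lemma aux_const_mem {R : Rationality Ω} {X : Set (Ω → ℝ)} (hM : IsMarket R X)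
    {c : ℝ} (hc : 0 ≤ c) : (fun _ : Ω => c) ∈ X := by
  have h := hM.add_nonneg_const 0 hM.zero_mem c hc
  simpa using h

private lemma aux_pi_const {R : Rationality Ω} {X : Set (Ω → ℝ)} {π : (Ω → ℝ) → ℝ}
    (hM : IsMarket R X) (hπ : IsPriceFun0 R X π) {c : ℝ} (hc : 0 < c) :
    π (fun _ : Ω => c) = c := by
  have hmem : (fun ω : Ω => c * (1 : Ω → ℝ) ω) ∈ X := by
    simpa using aux_const_mem hM hc.le
  have h := hπ.posHom 1 hM.one_mem c hc hmem
  simpa [hπ.norm_one] using h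

private lemma aux_pi_zero {R : Rationality Ω} {X : Set (Ω → ℝ)} {π : (Ω → ℝ) → ℝ}
    (hM : IsMarket R X) (hπ : IsPriceFun0 R X π) : 0 ≤ π 0 := by
  have heq : (fun ω => (0 : Ω → ℝ) ω + (0 : Ω → ℝ) ω) = (0 : Ω → ℝ) := by
    funext ω; simp
  have h := hπ.subadd 0 hM.zero_mem 0 hM.zero_mem (by rw [heq]; exact hM.zero_mem)
  rw [heq] at h
  linarith

private lemma aux_ge_add_const {R : Rationality Ω} {F g : Ω → ℝ} (h : R.ge F g) (c : ℝ) :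
    R.ge (fun ω => F ω + c) (fun ω => g ω + c) := by
  have h2 := R.affine F g (fun _ => 1) (fun _ => c) h (fun _ => zero_le_one)
    ⟨1, fun _ => le_refl 1⟩
  simpa using h2

private lemma aux_tail_mono {R : Rationality Ω} {X : Set (Ω → ℝ)} {π : (Ω → ℝ) → ℝ}
    (hM : IsMarket R X) (hπ : IsPriceFun0 R X π) {f : Ω → ℝ} {t s : ℝ} (hts : t ≤ s)
    (ht : (fun ω => f ω + t) ∈ X) :
    π (fun ω => f ω + s) - s ≤ π (fun ω => f ω + t) - t := by
  rcases eq_or_lt_of_le hts with rfl | h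
  · exact le_refl _
  · have hc : (0 : ℝ) < s - t := by linarith
    have hmemc : (fun _ : Ω => s - t) ∈ X := aux_const_mem hM hc.le
    have heq : (fun ω => (f ω + t) + (fun _ : Ω => s - t) ω) = (fun ω => f ω + s) := by
      funext ω; show f ω + t + (s - t) = f ω + s; ring
    have hmemsum : (fun ω => f ω + s) ∈ X := by
      have h2 := hM.add_nonneg_const _ ht (s - t) hc.le
      have heq2 : (fun ω => (f ω + t) + (s - t)) = (fun ω => f ω + s) := by
        funext ω; ring
      rwa [heq2] at h2
    have h3 := hπ.subadd (fun ω => f ω + t) ht (fun _ : Ω => s - t) hmemc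
      (by rw [heq]; exact hmemsum)
    rw [heq, aux_pi_const hM hπ hc] at h3
    linarith

private lemma aux_tail_lb0 {R : Rationality Ω} {X : Set (Ω → ℝ)} {π : (Ω → ℝ) → ℝ}
    (hM : IsMarket R X) (hπ : IsPriceFun0 R X π) {f : Ω → ℝ} {a : ℝ}
    (ha : R.ge f (fun _ => a)) {t : ℝ} (hat : 0 ≤ a + t)
    (ht : (fun ω => f ω + t) ∈ X) : a ≤ π (fun ω => f ω + t) - t := by
  have hge : R.ge (fun ω => f ω + t) (fun _ : Ω => a + t) := by
    have h := aux_ge_add_const ha t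
    exact h
  have hmemc : (fun _ : Ω => a + t) ∈ X := aux_const_mem hM hat
  have hmono := hπ.mono _ ht _ hmemc hge
  rcases eq_or_lt_of_le hat with h0 | h0
  · have hz : (fun _ : Ω => a + t) = (0 : Ω → ℝ) := by funext ω; simp [← h0]
    rw [hz] at hmono
    have := aux_pi_zero hM hπ
    linarith
  · rw [aux_pi_const hM hπ h0] at hmono
    linarith

private lemma aux_tail_lb {R : Rationality Ω} {X : Set (Ω → ℝ)} {π : (Ω → ℝ) → ℝ}
    (hM : IsMarket R X) (hπ : IsPriceFun0 R X π) {f : Ω → ℝ} {a : ℝ}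
    (ha : R.ge f (fun _ => a)) {t : ℝ}
    (ht : (fun ω => f ω + t) ∈ X) : a ≤ π (fun ω => f ω + t) - t := by
  rcases le_or_gt 0 (a + t) with h | h
  · exact aux_tail_lb0 hM hπ ha h ht
  · have hts : t ≤ -a := by linarith
    have hmem : (fun ω => f ω + (-a)) ∈ X := by
      have h2 := hM.add_nonneg_const _ ht (-a - t) (by linarith)
      have heq : (fun ω => (f ω + t) + (-a - t)) = (fun ω => f ω + (-a)) := by
        funext ω; ring
      rwa [heq] at h2
    have h1 := aux_tail_mono hM hπ hts ht
    have h2 := aux_tail_lb0 hM hπ ha (t := -a) (by linarith) hmem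
    linarith

private lemma aux_bddBelow {R : Rationality Ω} {X : Set (Ω → ℝ)} {π : (Ω → ℝ) → ℝ}
    (hM : IsMarket R X) (hπ : IsPriceFun0 R X π) {f : Ω → ℝ} (hf : f ∈ X) :
    BddBelow {y | ∃ t : ℝ, (fun ω => f ω + t) ∈ X ∧ y = π (fun ω => f ω + t) - t} := by
  obtain ⟨a, ha⟩ := hM.bddBelow f hf
  exact ⟨a, fun y ⟨t, ht, hy⟩ => hy ▸ aux_tail_lb hM hπ ha ht⟩

private lemma aux_nonempty {R : Rationality Ω} {X : Set (Ω → ℝ)} {π : (Ω → ℝ) → ℝ}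
    (hM : IsMarket R X) {f : Ω → ℝ} (hf : f ∈ X) :
    Set.Nonempty {y | ∃ t : ℝ, (fun ω => f ω + t) ∈ X ∧ y = π (fun ω => f ω + t) - t} := by
  have heq : (fun ω => f ω + (0:ℝ)) = f := by funext ω; simp
  exact ⟨π f, 0, by rw [heq]; exact hf, by rw [heq]; ring⟩

private lemma aux_cashPart_le {R : Rationality Ω} {X : Set (Ω → ℝ)} {π : (Ω → ℝ) → ℝ}
    (hM : IsMarket R X) (hπ : IsPriceFun0 R X π) {f : Ω → ℝ} (hf : f ∈ X) :
    cashPart X π f ≤ π f := by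
  have heq : (fun ω => f ω + (0:ℝ)) = f := by funext ω; simp
  exact csInf_le (aux_bddBelow hM hπ hf) ⟨0, by rw [heq]; exact hf, by rw [heq]; ring⟩

end Aux

theorem Cpi_subset_cashPart_subset_closure' {Ω : Type*} (R : Rationality Ω)
    (X : Set (Ω → ℝ)) (π : (Ω → ℝ) → ℝ) (hM : IsMarket R X) (hπ : IsPriceFun0 R X π) :
    Cpi R X π ⊆ Cpi R X (cashPart X π) ∧
    Cpi R X (cashPart X π) ⊆ uClosure (Cpi R X π) := by
  constructor
  · rintro g ⟨lam, hlam, f, hf, hge⟩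
    refine ⟨lam, hlam, f, hf, ?_⟩
    have hle : cashPart X π f ≤ π f := aux_cashPart_le hM hπ hf
    have hpt : R.ge (fun ω => lam * (f ω - cashPart X π f)) (fun ω => lam * (f ω - π f)) :=
      R.ge_of_le _ _ (fun ω => by nlinarith)
    exact R.trans _ _ _ hpt hge
  · rintro g ⟨lam, hlam, f, hf, hge⟩ ε hε
    have hδ : 0 < ε / lam := div_pos hε hlam
    obtain ⟨y, ⟨t, ht, hy⟩, hlt⟩ :=
      Real.lt_sInf_add_pos (aux_nonempty hM (π := π) hf) hδ
    refine ⟨fun ω => g ω + (-ε), ⟨lam, hlam, fun ω => f ω + t, ht, ?_⟩, fun ω => by simp [abs_of_pos hε, hε.le]⟩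
    have hkey : π (fun ω => f ω + t) - t < cashPart X π f + ε / lam := by
      rw [← hy]; exact hlt
    have hpt : R.ge (fun ω => lam * ((f ω + t) - π (fun ω => f ω + t)))
        (fun ω => lam * (f ω - cashPart X π f) + (-ε)) := by
      refine R.ge_of_le _ _ (fun ω => ?_)
      have h1 : lam * (ε / lam) = ε := by field_simp
      nlinarith [hkey]
    have h2 := aux_ge_add_const hge (-ε)
    exact R.trans _ _ _ hpt h2
/-- `𝒞(π) ⊆ 𝒞(π^a) ⊆ cl_u 𝒞(π)`. -/
theorem Cpi_subset_cashPart_subset_closure {Ω : Type*} (R : Rationality Ω)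
    (X : Set (Ω → ℝ)) (π : (Ω → ℝ) → ℝ) (hM : IsMarket R X) (hπ : IsPriceFun0 R X π) :
    Cpi R X π ⊆ Cpi R X (cashPart X π) ∧
    Cpi R X (cashPart X π) ⊆ uClosure (Cpi R X π) := by
  exact Cpi_subset_cashPart_subset_closure' R X π hM hπ
end

section
/- Let (𝒳, ≥_*, π) be a market with π ∈ Π₀(𝒳) and π^a its cash additive part. Then for every X ∈ 𝒳, π^a(X) ≤ 0 if and only if X ∈ cl_u 𝒞(π). Consequently π^a ∈ Π(𝒳) (i.e. π^a is free of arbitrage) if and only if cl_u 𝒞(π) ∩ {X ∈ 𝒳 : X >_* 0} = ∅. -/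
open Set Filter

namespace St7Aux

variable {Ω : Type*} {R : Rationality Ω} {X : Set (Ω → ℝ)} {π : (Ω → ℝ) → ℝ}

/-- The set whose infimum defines `cashPart`. -/
def Sset (X : Set (Ω → ℝ)) (π : (Ω → ℝ) → ℝ) (f : Ω → ℝ) : Set ℝ :=
  {y | ∃ t : ℝ, (fun ω => f ω + t) ∈ X ∧ y = π (fun ω => f ω + t) - t}

lemma cashPart_eq (f : Ω → ℝ) : cashPart X π f = sInf (Sset X π f) := rfl

lemma const_mem (hM : IsMarket R X) {c : ℝ} (hc : 0 ≤ c) : (fun _ : Ω => c) ∈ X := by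
  have h := hM.add_nonneg_const 0 hM.zero_mem c hc
  simpa using h

lemma pi_zero (hM : IsMarket R X) (hπ : IsPriceFun0 R X π) : π (0 : Ω → ℝ) = 0 := by
  have e : (fun ω => (2:ℝ) * (0 : Ω → ℝ) ω) = (0 : Ω → ℝ) := by funext ω; simp
  have h := hπ.posHom 0 hM.zero_mem 2 (by norm_num) (by rw [e]; exact hM.zero_mem)
  rw [e] at h
  linarith

lemma pi_const (hM : IsMarket R X) (hπ : IsPriceFun0 R X π) {c : ℝ} (hc : 0 ≤ c) :
    π (fun _ : Ω => c) = c := by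
  rcases hc.lt_or_eq with h | h
  · have e : (fun ω => c * (1 : Ω → ℝ) ω) = (fun _ : Ω => c) := by funext ω; simp
    have h2 := hπ.posHom 1 hM.one_mem c h (by rw [e]; exact const_mem hM hc)
    rw [e, hπ.norm_one] at h2
    simpa using h2
  · have e : (fun _ : Ω => c) = (0 : Ω → ℝ) := by funext ω; simp [← h]
    rw [e, pi_zero hM hπ, h]

lemma pi_add_const_le (hM : IsMarket R X) (hπ : IsPriceFun0 R X π) {f : Ω → ℝ}
    (hf : f ∈ X) {c : ℝ} (hc : 0 ≤ c) : π (fun ω => f ω + c) ≤ π f + c := by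
  have hc' : (fun _ : Ω => c) ∈ X := const_mem hM hc
  have hsum : (fun ω => f ω + (fun _ : Ω => c) ω) ∈ X := hM.add_nonneg_const f hf c hc
  have h := hπ.subadd f hf _ hc' hsum
  rw [pi_const hM hπ hc] at h
  exact h

lemma shift_mem (hM : IsMarket R X) {f : Ω → ℝ} {t s : ℝ}
    (ht : (fun ω => f ω + t) ∈ X) (hts : t ≤ s) : (fun ω => f ω + s) ∈ X := by
  have h := hM.add_nonneg_const _ ht (s - t) (by linarith)
  have e : (fun ω => (f ω + t) + (s - t)) = (fun ω => f ω + s) := by funext ω; ring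
  rwa [e] at h

lemma anti (hM : IsMarket R X) (hπ : IsPriceFun0 R X π) {f : Ω → ℝ} {t s : ℝ}
    (ht : (fun ω => f ω + t) ∈ X) (hts : t ≤ s) :
    π (fun ω => f ω + s) - s ≤ π (fun ω => f ω + t) - t := by
  have h := pi_add_const_le hM hπ ht (by linarith : (0:ℝ) ≤ s - t)
  have e : (fun ω => (f ω + t) + (s - t)) = (fun ω => f ω + s) := by funext ω; ring
  rw [e] at h
  linarith

lemma ge_add_const (R : Rationality Ω) {f g : Ω → ℝ} (h : R.ge f g) (s : ℝ) :
    R.ge (fun ω => f ω + s) (fun ω => g ω + s) := by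
  have h2 := R.affine f g (fun _ => 1) (fun _ => s) h (fun ω => by norm_num)
    ⟨1, fun ω => le_refl 1⟩
  have e1 : (fun ω => (fun _ : Ω => (1:ℝ)) ω * f ω + (fun _ : Ω => s) ω)
      = (fun ω => f ω + s) := by funext ω; ring
  have e2 : (fun ω => (fun _ : Ω => (1:ℝ)) ω * g ω + (fun _ : Ω => s) ω)
      = (fun ω => g ω + s) := by funext ω; ring
  rwa [e1, e2] at h2

lemma bddBelow_S (hM : IsMarket R X) (hπ : IsPriceFun0 R X π) {f : Ω → ℝ} (hf : f ∈ X) :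
    BddBelow (Sset X π f) := by
  obtain ⟨a, ha⟩ := hM.bddBelow f hf
  refine ⟨a, ?_⟩
  rintro y ⟨t, htX, rfl⟩
  set s : ℝ := max t (max 0 (-a)) with hs
  have hts : t ≤ s := le_max_left _ _
  have hs0 : 0 ≤ s := le_trans (le_max_left _ _) (le_max_right _ _)
  have hsa : 0 ≤ a + s := by
    have : -a ≤ s := le_trans (le_max_right _ _) (le_max_right _ _)
    linarith
  have hmemS : (fun ω => f ω + s) ∈ X := shift_mem hM htX hts
  have hge : R.ge (fun ω => f ω + s) (fun _ : Ω => a + s) := by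
    have h2 := ge_add_const R ha s
    have e : (fun ω => (fun _ : Ω => a) ω + s) = (fun _ : Ω => a + s) := by funext ω; ring
    rwa [e] at h2
  have hmono := hπ.mono _ hmemS _ (const_mem hM hsa) hge
  rw [pi_const hM hπ hsa] at hmono
  have h3 := anti hM hπ htX hts
  linarith

lemma S_nonempty {f : Ω → ℝ} (hf : f ∈ X) : (Sset X π f).Nonempty := by
  refine ⟨π (fun ω => f ω + 0) - 0, 0, ?_, rfl⟩
  have e : (fun ω => f ω + 0) = f := by funext ω; ring
  rwa [e]

lemma cashPart_le (hM : IsMarket R X) (hπ : IsPriceFun0 R X π) {f : Ω → ℝ} (hf : f ∈ X)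
    {t : ℝ} (ht : (fun ω => f ω + t) ∈ X) :
    cashPart X π f ≤ π (fun ω => f ω + t) - t :=
  csInf_le (bddBelow_S hM hπ hf) ⟨t, ht, rfl⟩

lemma exists_good (hM : IsMarket R X) (hπ : IsPriceFun0 R X π) {f : Ω → ℝ} (hf : f ∈ X)
    {ε : ℝ} (hε : 0 < ε) : ∃ s : ℝ, 0 ≤ s ∧ (fun ω => f ω + s) ∈ X ∧
      π (fun ω => f ω + s) - s < cashPart X π f + ε := by
  have hlt : sInf (Sset X π f) < cashPart X π f + ε := by
    rw [← cashPart_eq]; linarith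
  obtain ⟨y, ⟨t, htX, rfl⟩, hy⟩ := exists_lt_of_csInf_lt (S_nonempty hf) hlt
  refine ⟨max t 0, le_max_right _ _, shift_mem hM htX (le_max_left _ _), ?_⟩
  have := anti hM hπ htX (le_max_left t 0)
  linarith

/-- The key upper bound, first for `lam ≥ 1`. -/
lemma key1 (hM : IsMarket R X) (hπ : IsPriceFun0 R X π) {f : Ω → ℝ} (hf : f ∈ X)
    {ε lam : ℝ} (hε : 0 < ε) (hlam : 1 ≤ lam) {h : Ω → ℝ} (hh : h ∈ X)
    (hge : R.ge (fun ω => lam * (h ω - π h)) (fun ω => f ω - ε)) :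
    cashPart X π f ≤ ε := by
  have hlam0 : (0:ℝ) < lam := by linarith
  set t : ℝ := max (lam * π h - ε) 0 with htdef
  have ht0 : 0 ≤ t := le_max_right _ _
  set c : ℝ := ε - lam * π h + t with hcdef
  have hc0 : 0 ≤ c := by
    have := le_max_left (lam * π h - ε) 0
    simp only [hcdef]; linarith
  have hft : (fun ω => f ω + t) ∈ X := hM.add_nonneg_const f hf t ht0
  -- u = (f + t)/lam ∈ X by convexity
  have hu : (fun ω => (1/lam) * (f ω + t)) ∈ X := by
    have hcv := hM.convex _ hft 0 hM.zero_mem (1/lam)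
      (by positivity) ((div_le_one hlam0).mpr hlam)
    have e : (fun ω => (1/lam) * (f ω + t) + (1 - 1/lam) * (0 : Ω → ℝ) ω)
        = (fun ω => (1/lam) * (f ω + t)) := by funext ω; simp
    rwa [e] at hcv
  have hv : (fun ω => h ω + c/lam) ∈ X :=
    hM.add_nonneg_const h hh (c/lam) (by positivity)
  -- v ≥ u
  have hvu : R.ge (fun ω => h ω + c/lam) (fun ω => (1/lam) * (f ω + t)) := by
    have h2 := R.affine _ _ (fun _ => 1/lam) (fun _ => π h + c/lam) hge
      (fun ω => by positivity) ⟨1/lam, fun ω => le_refl _⟩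
    have e1 : (fun ω => (fun _ : Ω => 1/lam) ω * (lam * (h ω - π h)) +
        (fun _ : Ω => π h + c/lam) ω) = (fun ω => h ω + c/lam) := by
      funext ω; field_simp; ring
    have e2 : (fun ω => (fun _ : Ω => 1/lam) ω * (f ω - ε) +
        (fun _ : Ω => π h + c/lam) ω) = (fun ω => (1/lam) * (f ω + t)) := by
      funext ω
      have : ε = lam * π h + c - t := by rw [hcdef]; ring
      field_simp
      rw [this]; ring
    rwa [e1, e2] at h2
  have hπu : π (fun ω => (1/lam) * (f ω + t)) ≤ π h + c/lam := by
    have h3 := hπ.mono _ hv _ hu hvu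
    have h4 := pi_add_const_le hM hπ hh (by positivity : (0:ℝ) ≤ c/lam)
    linarith
  have hscale : π (fun ω => f ω + t) = lam * π (fun ω => (1/lam) * (f ω + t)) := by
    have e : (fun ω => lam * ((1/lam) * (f ω + t))) = (fun ω => f ω + t) := by
      funext ω; field_simp
    have h5 := hπ.posHom _ hu lam hlam0 (by rw [e]; exact hft)
    rw [e] at h5
    exact h5
  have h6 : cashPart X π f ≤ π (fun ω => f ω + t) - t := cashPart_le hM hπ hf hft
  have h7 : lam * (π h + c/lam) = lam * π h + c := by field_simp
  have h8 : lam * π (fun ω => (1/lam) * (f ω + t)) ≤ lam * π h + c := by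
    rw [← h7]
    exact mul_le_mul_of_nonneg_left hπu (le_of_lt hlam0)
  have : lam * π h + c - t = ε := by rw [hcdef]; ring
  linarith

/-- The key upper bound for any `lam > 0`. -/
lemma key (hM : IsMarket R X) (hπ : IsPriceFun0 R X π) {f : Ω → ℝ} (hf : f ∈ X)
    {ε lam : ℝ} (hε : 0 < ε) (hlam : 0 < lam) {h : Ω → ℝ} (hh : h ∈ X)
    (hge : R.ge (fun ω => lam * (h ω - π h)) (fun ω => f ω - ε)) :
    cashPart X π f ≤ ε := by
  rcases le_or_gt 1 lam with h1 | h1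
  · exact key1 hM hπ hf hε h1 hh hge
  · -- replace (lam, h) by (1, lam • h)
    have hh' : (fun ω => lam * h ω) ∈ X := by
      have hcv := hM.convex h hh 0 hM.zero_mem lam hlam.le h1.le
      have e : (fun ω => lam * h ω + (1 - lam) * (0 : Ω → ℝ) ω)
          = (fun ω => lam * h ω) := by funext ω; simp
      rwa [e] at hcv
    have hph' : π (fun ω => lam * h ω) = lam * π h := hπ.posHom h hh lam hlam hh'
    have e : (fun ω => (1:ℝ) * ((fun ω' => lam * h ω') ω - π (fun ω' => lam * h ω')))
        = (fun ω => lam * (h ω - π h)) := by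
      funext ω; rw [hph']; ring
    exact key1 hM hπ hf hε le_rfl hh' (by rw [e]; exact hge)

/-- Part 1 of Statement 7. -/
lemma part1 (hM : IsMarket R X) (hπ : IsPriceFun0 R X π) {f : Ω → ℝ} (hf : f ∈ X) :
    cashPart X π f ≤ 0 ↔ f ∈ uClosure (Cpi R X π) := by
  constructor
  · intro hc ε hε
    have hlt : sInf (Sset X π f) < ε := by rw [← cashPart_eq]; linarith
    obtain ⟨y, ⟨t, htX, rfl⟩, hy⟩ := exists_lt_of_csInf_lt (S_nonempty hf) hlt
    set δ : ℝ := π (fun ω => f ω + t) - t with hδ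
    set δ' : ℝ := max δ 0 with hδ'
    refine ⟨fun ω => f ω - δ', ⟨1, one_pos, (fun ω => f ω + t), htX, ?_⟩, ?_⟩
    · apply R.ge_of_le
      intro ω
      have : δ ≤ δ' := le_max_left _ _
      simp only [hδ] at this ⊢
      nlinarith [this]
    · intro ω
      have h0 : 0 ≤ δ' := le_max_right _ _
      have h1 : δ' ≤ ε := by
        have : δ < ε := hy
        exact max_le this.le hε.le
      rw [show f ω - (f ω - δ') = δ' by ring, abs_of_nonneg h0]
      exact h1
  · intro hcl
    have hub : ∀ ε : ℝ, 0 < ε → cashPart X π f ≤ ε := by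
      intro ε hε
      obtain ⟨g, ⟨lam, hlam, h, hh, hge⟩, hd⟩ := hcl ε hε
      have hgf : R.ge g (fun ω => f ω - ε) := by
        apply R.ge_of_le
        intro ω
        have := hd ω
        have := abs_le.mp (hd ω)
        linarith [this.1]
      exact key hM hπ hf hε hlam hh (R.trans _ _ _ hge hgf)
    linarith [le_of_forall_pos_le_add (by intro ε hε; simpa using hub ε hε :
      ∀ ε : ℝ, 0 < ε → cashPart X π f ≤ 0 + ε)]

lemma cash_smul_le (hM : IsMarket R X) (hπ : IsPriceFun0 R X π) {f : Ω → ℝ} (hf : f ∈ X)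
    {lam : ℝ} (hlam : 0 < lam) (hlf : (fun ω => lam * f ω) ∈ X) :
    cashPart X π (fun ω => lam * f ω) ≤ lam * cashPart X π f := by
  apply le_of_forall_pos_le_add
  intro δ hδ
  obtain ⟨s, hs0, hsX, hsv⟩ := exists_good hM hπ hf (show (0:ℝ) < δ/lam by positivity)
  have htX : (fun ω => (fun ω' => lam * f ω') ω + lam * s) ∈ X := by
    have := hM.add_nonneg_const _ hlf (lam * s) (by positivity)
    exact this
  have hscale : π (fun ω => lam * f ω + lam * s) = lam * π (fun ω => f ω + s) := by
    have e : (fun ω => lam * (f ω + s)) = (fun ω => lam * f ω + lam * s) := by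
      funext ω; ring
    have h5 := hπ.posHom _ hsX lam hlam (by rw [e]; exact htX)
    rw [e] at h5; exact h5
  have h6 : cashPart X π (fun ω => lam * f ω) ≤ π (fun ω => lam * f ω + lam * s) - lam * s :=
    cashPart_le hM hπ hlf htX
  rw [hscale] at h6
  have h7 : lam * (π (fun ω => f ω + s) - s) ≤ lam * (cashPart X π f + δ/lam) :=
    mul_le_mul_of_nonneg_left hsv.le hlam.le
  have h8 : lam * (cashPart X π f + δ/lam) = lam * cashPart X π f + δ := by field_simp
  nlinarith

lemma cash_posHom (hM : IsMarket R X) (hπ : IsPriceFun0 R X π) {f : Ω → ℝ} (hf : f ∈ X)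
    {lam : ℝ} (hlam : 0 < lam) (hlf : (fun ω => lam * f ω) ∈ X) :
    cashPart X π (fun ω => lam * f ω) = lam * cashPart X π f := by
  have h1 := cash_smul_le hM hπ hf hlam hlf
  have e : (fun ω => (1/lam) * (fun ω' => lam * f ω') ω) = f := by
    funext ω; field_simp
  have h2 := cash_smul_le hM hπ hlf (show (0:ℝ) < 1/lam by positivity) (by rw [e]; exact hf)
  rw [e] at h2
  have h3 : lam * cashPart X π f ≤ lam * ((1/lam) * cashPart X π (fun ω => lam * f ω)) :=
    mul_le_mul_of_nonneg_left h2 hlam.le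
  have h4 : lam * ((1/lam) * cashPart X π (fun ω => lam * f ω))
      = cashPart X π (fun ω => lam * f ω) := by field_simp
  linarith

lemma cash_subadd (hM : IsMarket R X) (hπ : IsPriceFun0 R X π) {f g : Ω → ℝ}
    (hf : f ∈ X) (hg : g ∈ X) (hfg : (fun ω => f ω + g ω) ∈ X) :
    cashPart X π (fun ω => f ω + g ω) ≤ cashPart X π f + cashPart X π g := by
  apply le_of_forall_pos_le_add
  intro δ hδ
  obtain ⟨s, hs0, hsX, hsv⟩ := exists_good hM hπ hf (show (0:ℝ) < δ/2 by positivity)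
  obtain ⟨u, hu0, huX, huv⟩ := exists_good hM hπ hg (show (0:ℝ) < δ/2 by positivity)
  have htX : (fun ω => (fun ω' => f ω' + g ω') ω + (s + u)) ∈ X := by
    exact hM.add_nonneg_const _ hfg (s + u) (by linarith)
  have hsum : (fun ω => (fun ω' => f ω' + s) ω + (fun ω' => g ω' + u) ω) ∈ X := by
    have e : (fun ω => (f ω + s) + (g ω + u)) = (fun ω => (f ω + g ω) + (s + u)) := by
      funext ω; ring
    rw [e]; exact htX
  have h1 := hπ.subadd _ hsX _ huX hsum
  have e2 : (fun ω => (f ω + s) + (g ω + u)) = (fun ω => (f ω + g ω) + (s + u)) := by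
    funext ω; ring
  rw [e2] at h1
  have h2 : cashPart X π (fun ω => f ω + g ω) ≤
      π (fun ω => (f ω + g ω) + (s + u)) - (s + u) :=
    cashPart_le hM hπ hfg htX
  linarith

lemma cash_norm_one (hM : IsMarket R X) (hπ : IsPriceFun0 R X π) :
    cashPart X π (1 : Ω → ℝ) = 1 := by
  have hone : ∀ s : ℝ, 0 ≤ s → π (fun ω => (1 : Ω → ℝ) ω + s) = 1 + s := by
    intro s hs
    have e : (fun ω => (1 : Ω → ℝ) ω + s) = (fun _ : Ω => 1 + s) := by
      funext ω; simp
    rw [e, pi_const hM hπ (by linarith : (0:ℝ) ≤ 1 + s)]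
  apply le_antisymm
  · have h0 : (fun ω => (1 : Ω → ℝ) ω + 0) ∈ X := by
      have e : (fun ω => (1 : Ω → ℝ) ω + 0) = 1 := by funext ω; simp
      rw [e]; exact hM.one_mem
    have := cashPart_le hM hπ hM.one_mem h0
    rw [hone 0 le_rfl] at this
    linarith
  · rw [cashPart_eq]
    apply le_csInf (S_nonempty hM.one_mem)
    rintro y ⟨t, htX, rfl⟩
    have h1 := anti hM hπ htX (le_max_left t 0)
    rw [hone (max t 0) (le_max_right t 0)] at h1
    linarith

lemma cash_mono (hM : IsMarket R X) (hπ : IsPriceFun0 R X π) {f g : Ω → ℝ}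
    (hf : f ∈ X) (hg : g ∈ X) (hfg : R.ge f g) :
    cashPart X π g ≤ cashPart X π f := by
  rw [cashPart_eq f]
  apply le_csInf (S_nonempty hf)
  rintro y ⟨t, htX, rfl⟩
  set s : ℝ := max t 0 with hs
  have hs0 : 0 ≤ s := le_max_right _ _
  have h1 := anti hM hπ htX (le_max_left t 0)
  have hfsX : (fun ω => f ω + s) ∈ X := shift_mem hM htX (le_max_left t 0)
  have hgsX : (fun ω => g ω + s) ∈ X := hM.add_nonneg_const g hg s hs0
  have hge := ge_add_const R hfg s
  have h2 := hπ.mono _ hfsX _ hgsX hge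
  have h3 := cashPart_le hM hπ hg hgsX
  linarith

lemma cash_PF0 (hM : IsMarket R X) (hπ : IsPriceFun0 R X π) :
    IsPriceFun0 R X (cashPart X π) where
  posHom := fun f hf lam hlam hlf => cash_posHom hM hπ hf hlam hlf
  subadd := fun f hf g hg hfg => cash_subadd hM hπ hf hg hfg
  norm_one := cash_norm_one hM hπ
  mono := fun f hf g hg h => cash_mono hM hπ hf hg h

end St7Aux
/-- for `X ∈ 𝒳`, `π^a(X) ≤ 0` iff `X ∈ cl_u 𝒞(π)`; consequently `π^a`
is a price function (free of arbitrage) iff `cl_u 𝒞(π) ∩ {X ∈ 𝒳 : X >_* 0} = ∅`. -/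
theorem cashPart_nonpos_iff_mem_closure {Ω : Type*} (R : Rationality Ω)
    (X : Set (Ω → ℝ)) (π : (Ω → ℝ) → ℝ) (hM : IsMarket R X) (hπ : IsPriceFun0 R X π) :
    (∀ f ∈ X, (cashPart X π f ≤ 0 ↔ f ∈ uClosure (Cpi R X π))) ∧
    (IsPriceFun R X (cashPart X π) ↔
      uClosure (Cpi R X π) ∩ {f ∈ X | R.gt f 0} = ∅) := by
  constructor
  · exact fun f hf => St7Aux.part1 hM hπ hf
  · constructor
    · intro hPF
      apply Set.eq_empty_iff_forall_notMem.mpr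
      rintro f ⟨hcl, hfX, hgt⟩
      have h1 : cashPart X π f ≤ 0 := (St7Aux.part1 hM hπ hfX).mpr hcl
      have h2 := hPF.arbFree f hfX hgt
      linarith
    · intro hempty
      refine ⟨St7Aux.cash_PF0 hM hπ, ?_⟩
      intro f hfX hgt
      by_contra hle
      push_neg at hle
      have hcl : f ∈ uClosure (Cpi R X π) := (St7Aux.part1 hM hπ hfX).mp hle
      have : f ∈ uClosure (Cpi R X π) ∩ {f ∈ X | R.gt f 0} := ⟨hcl, hfX, hgt⟩
      rw [hempty] at this
      exact this
end

section
/- Assume there exists an uncountable family {A_α : α ∈ 𝔄} of pairwise disjoint subsets of Ω none of which is negligible. Then for each market (𝒳, ≥_*, π) with π ∈ Π(𝒳), every ρ ∈ Ext(π) satisfies 𝓂(ρ) = 1; in particular inf_{ρ ∈ Ext(π)} 𝓂(ρ) = 1 (with the convention inf ∅ = 1). -/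
open Set Filter

section AuxMP

variable {Ω : Type*} (R : Rationality Ω) {X : Set (Ω → ℝ)}

lemma mem_Lspan_of_bdd (hM : IsMarket R X) {g : Ω → ℝ} (c : ℝ)
    (hg : ∀ ω, |g ω| ≤ c) : g ∈ Lspan R X := by
  refine ⟨max c 1, lt_of_lt_of_le one_pos (le_max_right _ _), 1, hM.one_mem, ?_⟩
  apply R.ge_of_le
  intro ω
  simp only [Pi.one_apply, mul_one]
  exact le_trans (hg ω) (le_max_left _ _)

lemma zero_mem_Lspan (hM : IsMarket R X) : (0 : Ω → ℝ) ∈ Lspan R X :=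
  mem_Lspan_of_bdd R hM 0 (fun ω => by simp)

lemma rho_zero {ρ : (Ω → ℝ) → ℝ} (hM : IsMarket R X)
    (hρ : IsPriceFun R (Lspan R X) ρ) : ρ 0 = 0 := by
  have h0 := zero_mem_Lspan R hM
  have he : (fun ω => (2:ℝ) * (0:Ω→ℝ) ω) = (0 : Ω → ℝ) := by funext ω; simp
  have := hρ.posHom 0 h0 2 (by norm_num) (by rw [he]; exact h0)
  rw [he] at this
  linarith

lemma rho_nonneg {ρ : (Ω → ℝ) → ℝ} (hM : IsMarket R X)
    (hρ : IsPriceFun R (Lspan R X) ρ) {g : Ω → ℝ} (hg : g ∈ Lspan R X)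
    (h : ∀ ω, 0 ≤ g ω) : 0 ≤ ρ g := by
  have := hρ.mono g hg 0 (zero_mem_Lspan R hM)
    (R.ge_of_le g 0 (fun ω => by simpa using h ω))
  rwa [rho_zero R hM hρ] at this

end AuxMP

/-- Lemma `lemma m=1`: if there is an uncountable pairwise disjoint
family of non-negligible subsets of `Ω`, then every `ρ ∈ Ext(π)` has market power `1`;
in particular `inf_{ρ ∈ Ext(π)} 𝓂(ρ) = 1` (with the convention `inf ∅ = 1`). -/
theorem marketPower_eq_one_of_uncountable {Ω : Type*} (R : Rationality Ω)
    (X : Set (Ω → ℝ)) (π : (Ω → ℝ) → ℝ) (hM : IsMarket R X) (hπ : IsPriceFun R X π)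
    (hS : ∃ S : Set (Set Ω), ¬ S.Countable ∧ S.PairwiseDisjoint id ∧
      ∀ A ∈ S, ¬ R.Negligible A) :
    (∀ ρ : (Ω → ℝ) → ℝ, IsPriceFun R (Lspan R X) ρ → (∀ f ∈ X, ρ f ≤ π f) →
      marketPower ρ = 1) ∧
    ({ρ : (Ω → ℝ) → ℝ | IsPriceFun R (Lspan R X) ρ ∧ ∀ f ∈ X, ρ f ≤ π f} = ∅ ∨
      sInf {x | ∃ ρ : (Ω → ℝ) → ℝ,
        (IsPriceFun R (Lspan R X) ρ ∧ ∀ f ∈ X, ρ f ≤ π f) ∧ x = marketPower ρ} = 1) := by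
  obtain ⟨S, hSunc, hSdisj, hSneg⟩ := hS
  have key : ∀ ρ : (Ω → ℝ) → ℝ, IsPriceFun R (Lspan R X) ρ → (∀ f ∈ X, ρ f ≤ π f) →
      marketPower ρ = 1 := by
    intro ρ hρ _hext
    unfold marketPower
    set T := {r | ∃ (N : ℕ) (f : Fin N → Ω → ℝ),
      (∀ i, ∀ ω, 0 ≤ f i ω) ∧ (∀ i, ∃ c : ℝ, ∀ ω, f i ω ≤ c) ∧
      r = ((∑ i, ρ (f i)) - ρ (fun ω => ∑ i, f i ω)) / (∑ i, ρ (f i))} with hT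
    have hmemL : ∀ {g : Ω → ℝ} (c : ℝ), (∀ ω, 0 ≤ g ω) → (∀ ω, g ω ≤ c) →
        g ∈ Lspan R X := by
      intro g c h0 h1
      exact mem_Lspan_of_bdd R hM c (fun ω => by rw [abs_of_nonneg (h0 ω)]; exact h1 ω)
    have hub : ∀ r ∈ T, r ≤ 1 := by
      rintro r ⟨N, f, hnn, hbd, rfl⟩
      choose c hc using hbd
      have hfi : ∀ i, f i ∈ Lspan R X := fun i => hmemL (c i) (hnn i) (hc i)
      have hSnn : 0 ≤ ∑ i, ρ (f i) :=
        Finset.sum_nonneg fun i _ => rho_nonneg R hM hρ (hfi i) (hnn i)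
      have hsummem : (fun ω => ∑ i, f i ω) ∈ Lspan R X :=
        hmemL (∑ i, c i) (fun ω => Finset.sum_nonneg fun i _ => hnn i ω)
          (fun ω => Finset.sum_le_sum fun i _ => hc i ω)
      have hsnn : 0 ≤ ρ (fun ω => ∑ i, f i ω) :=
        rho_nonneg R hM hρ hsummem (fun ω => Finset.sum_nonneg fun i _ => hnn i ω)
      rcases eq_or_lt_of_le hSnn with h | h
      · rw [← h, div_zero]; norm_num
      · rw [div_le_one h]; linarith
    have hne : T.Nonempty := ⟨_, 0, Fin.elim0, fun i => i.elim0, fun i => i.elim0, rfl⟩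
    have hbdd : BddAbove T := ⟨1, hub⟩
    have hind_mem : ∀ A : Set Ω, A.indicator (fun _ => (1:ℝ)) ∈ Lspan R X := by
      intro A
      refine mem_Lspan_of_bdd R hM 1 (fun ω => ?_)
      by_cases h : ω ∈ A
      · simp [Set.indicator_of_mem h]
      · simp [Set.indicator_of_notMem h]
    have hind_pos : ∀ A ∈ S, 0 < ρ (A.indicator (fun _ => (1:ℝ))) := by
      intro A hA
      refine hρ.arbFree _ (hind_mem A) ⟨R.ge_of_le _ _ (fun ω => ?_), hSneg A hA⟩
      simpa using Set.indicator_nonneg (fun _ _ => (zero_le_one : (0:ℝ) ≤ 1)) ω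
    have hstep : ∃ n : ℕ,
        ¬ (S ∩ {A | 1/((n:ℝ)+1) ≤ ρ (A.indicator fun _ => (1:ℝ))}).Countable := by
      by_contra hcon
      push_neg at hcon
      apply hSunc
      have hsub : S ⊆ ⋃ n : ℕ,
          (S ∩ {A | 1/((n:ℝ)+1) ≤ ρ (A.indicator fun _ => (1:ℝ))}) := by
        intro A hA
        obtain ⟨k, hk⟩ := exists_nat_one_div_lt (hind_pos A hA)
        exact Set.mem_iUnion.mpr ⟨k, hA, le_of_lt hk⟩
      exact (Set.countable_iUnion hcon).mono hsub
    obtain ⟨n, hn⟩ := hstep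
    set cc : ℝ := 1/((n:ℝ)+1) with hccdef
    have hcpos : 0 < cc := by positivity
    have hinf : (S ∩ {A | cc ≤ ρ (A.indicator fun _ => (1:ℝ))}).Infinite :=
      fun hfin => hn hfin.countable
    let e := hinf.natEmbedding
    have hlow : ∀ δ : ℝ, 0 < δ → 1 - δ ≤ sSup T := by
      intro δ hδ
      obtain ⟨N, hN⟩ := exists_nat_gt (((n:ℝ)+1)/δ)
      have hN0 : 0 < (N:ℝ) := lt_of_le_of_lt (by positivity) hN
      set A : Fin N → Set Ω := fun i => (e i.val : Set Ω) with hA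
      have hAmem : ∀ i, A i ∈ S ∩ {B | cc ≤ ρ (B.indicator fun _ => (1:ℝ))} :=
        fun i => (e i.val).2
      have hAdisj : ∀ i j : Fin N, i ≠ j → Disjoint (A i) (A j) := by
        intro i j hij
        refine hSdisj (hAmem i).1 (hAmem j).1 ?_
        intro h
        exact hij (Fin.ext (e.injective (Subtype.ext h)))
      set f : Fin N → Ω → ℝ := fun i => (A i).indicator (fun _ => (1:ℝ)) with hf
      have hnn : ∀ i ω, 0 ≤ f i ω :=
        fun i ω => Set.indicator_nonneg (fun _ _ => zero_le_one) ω
      have hle1 : ∀ i ω, f i ω ≤ 1 := by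
        intro i ω
        by_cases h : ω ∈ A i
        · simp [hf, Set.indicator_of_mem h]
        · simp [hf, Set.indicator_of_notMem h]
      have hsum_le : ∀ ω, (∑ i, f i ω) ≤ 1 := by
        intro ω
        by_cases h : ∃ i, ω ∈ A i
        · obtain ⟨i0, hi0⟩ := h
          have hs : ∑ i, f i ω = f i0 ω := by
            refine Finset.sum_eq_single_of_mem i0 (Finset.mem_univ _) ?_
            intro j _ hj
            have hω : ω ∉ A j :=
              Set.disjoint_left.mp (hAdisj i0 j (Ne.symm hj)) hi0
            exact Set.indicator_of_notMem hω _
          rw [hs]; exact hle1 i0 ω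
        · push_neg at h
          have hs : ∑ i, f i ω = 0 :=
            Finset.sum_eq_zero fun j _ => Set.indicator_of_notMem (h j) _
          rw [hs]; exact zero_le_one
      have hρfi : ∀ i, cc ≤ ρ (f i) := fun i => (hAmem i).2
      have hSdge : (N:ℝ) * cc ≤ ∑ i, ρ (f i) := by
        calc (N:ℝ) * cc = (Finset.univ (α := Fin N)).card • cc := by
              simp [nsmul_eq_mul]
          _ ≤ ∑ i, ρ (f i) := Finset.card_nsmul_le_sum _ _ _ (fun i _ => hρfi i)
      have hSdpos : 0 < ∑ i, ρ (f i) := lt_of_lt_of_le (by positivity) hSdge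
      have hsum_mem : (fun ω => ∑ i, f i ω) ∈ Lspan R X :=
        hmemL 1 (fun ω => Finset.sum_nonneg fun i _ => hnn i ω) hsum_le
      have hρsum_le : ρ (fun ω => ∑ i, f i ω) ≤ 1 := by
        have h1 : R.ge 1 (fun ω => ∑ i, f i ω) :=
          R.ge_of_le _ _ (fun ω => by simpa using hsum_le ω)
        have := hρ.mono 1 (mem_Lspan_of_bdd R hM 1 (fun ω => by simp)) _ hsum_mem h1
        rwa [hρ.norm_one] at this
      have hmem : ((∑ i, ρ (f i)) - ρ (fun ω => ∑ i, f i ω)) / (∑ i, ρ (f i)) ∈ T :=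
        ⟨N, f, hnn, fun i => ⟨1, hle1 i⟩, rfl⟩
      have hr : 1 - δ ≤ ((∑ i, ρ (f i)) - ρ (fun ω => ∑ i, f i ω)) / (∑ i, ρ (f i)) := by
        rw [le_div_iff₀ hSdpos]
        have h2 : ((n:ℝ)+1)/δ ≤ (N:ℝ) := le_of_lt hN
        have h3 : ((n:ℝ)+1) ≤ δ * (N:ℝ) := by rwa [div_le_iff₀ hδ, mul_comm] at h2
        have h1 : 1 ≤ δ * ∑ i, ρ (f i) := by
          calc (1:ℝ) = ((n:ℝ)+1) * cc := by
                rw [hccdef]; field_simp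
            _ ≤ (δ * N) * cc := mul_le_mul_of_nonneg_right h3 (le_of_lt hcpos)
            _ = δ * ((N:ℝ) * cc) := by ring
            _ ≤ δ * ∑ i, ρ (f i) := mul_le_mul_of_nonneg_left hSdge (le_of_lt hδ)
        nlinarith [hρsum_le]
      exact le_trans hr (le_csSup hbdd hmem)
    refine le_antisymm (csSup_le hne hub) ?_
    refine le_of_forall_pos_le_add (fun δ hδ => ?_)
    linarith [hlow δ hδ]
  refine ⟨key, ?_⟩
  by_cases hE : {ρ : (Ω → ℝ) → ℝ | IsPriceFun R (Lspan R X) ρ ∧ ∀ f ∈ X, ρ f ≤ π f} = ∅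
  · exact Or.inl hE
  · right
    rw [Set.eq_empty_iff_forall_notMem] at hE
    push_neg at hE
    obtain ⟨ρ0, hρ0⟩ := hE
    have hval : {x | ∃ ρ : (Ω → ℝ) → ℝ,
        (IsPriceFun R (Lspan R X) ρ ∧ ∀ f ∈ X, ρ f ≤ π f) ∧ x = marketPower ρ} = {1} := by
      ext x
      simp only [Set.mem_setOf_eq, Set.mem_singleton_iff]
      constructor
      · rintro ⟨ρ, ⟨h1, h2⟩, rfl⟩
        exact key ρ h1 h2
      · rintro rfl
        exact ⟨ρ0, hρ0, (key ρ0 hρ0.1 hρ0.2).symm⟩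
    rw [hval, csInf_singleton]
end
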